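/- arXiv:2301.09517 — 8 statements merged into one kernel-verified Lean document; each statement's English description precedes it below -/
import Mathlib

section
/- Fix Z = (z_1,…,z_ℓ) ∈ 𝒳^ℓ and s ≤ ℓ, and define g_j := ∑_{i=1}^ℓ U_{ij} φ(z_i) ∈ H for j = 1,…,ℓ. Then ⟨g_i, g_j⟩_H = δ_{ij} λ_j for all i,j, and the orthogonal projection P_{Z,s} of H onto span{g_1,…,g_s} satisfies ⟨φ(x), P_{Z,s} φ(y)⟩_H = k_s^Z(x,y) for all x, y ∈ 𝒳; in particular 0 ≤ k_s^Z(x,x) ≤ k(x,x) for every x ∈ 𝒳. -/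
open scoped RealInnerProductSpace BigOperators
open Matrix MeasureTheory

/-- `B` is the Moore–Penrose pseudo-inverse of `A`. -/
def IsMoorePenrose {m n : Type*} [Fintype m] [Fintype n]
    (A : Matrix m n ℝ) (B : Matrix n m ℝ) : Prop :=
  A * B * A = A ∧ B * A * B = B ∧ (A * B)ᵀ = A * B ∧ (B * A)ᵀ = B * A

theorem mp_unique {n : Type*} [Fintype n] [DecidableEq n]
    (A B C : Matrix n n ℝ) (hB : IsMoorePenrose A B) (hC : IsMoorePenrose A C) :
    B = C := by
  obtain ⟨b1, b2, b3, b4⟩ := hB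
  obtain ⟨c1, c2, c3, c4⟩ := hC
  have hAB : A * B = A * C := by
    calc A * B = (A * B)ᵀ := b3.symm
      _ = Bᵀ * Aᵀ := transpose_mul _ _
      _ = Bᵀ * (A * C * A)ᵀ := by rw [c1]
      _ = Bᵀ * (Aᵀ * (A * C)ᵀ) := by rw [transpose_mul]
      _ = Bᵀ * (Aᵀ * (A * C)) := by rw [c3]
      _ = (Bᵀ * Aᵀ) * (A * C) := by rw [Matrix.mul_assoc]
      _ = (A * B)ᵀ * (A * C) := by rw [transpose_mul]
      _ = (A * B) * (A * C) := by rw [b3]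
      _ = (A * B * A) * C := (Matrix.mul_assoc _ _ _).symm
      _ = A * C := by rw [b1]
  have hBA : B * A = C * A := by
    calc B * A = (B * A)ᵀ := b4.symm
      _ = Aᵀ * Bᵀ := transpose_mul _ _
      _ = (A * C * A)ᵀ * Bᵀ := by rw [c1]
      _ = ((C * A)ᵀ * Aᵀ) * Bᵀ := by
            rw [Matrix.mul_assoc, transpose_mul]
      _ = ((C * A) * Aᵀ) * Bᵀ := by rw [c4]
      _ = (C * A) * (Aᵀ * Bᵀ) := by rw [Matrix.mul_assoc]
      _ = (C * A) * (B * A)ᵀ := by rw [transpose_mul]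
      _ = (C * A) * (B * A) := by rw [b4]
      _ = C * (A * B * A) := by
            rw [Matrix.mul_assoc C A (B * A), ← Matrix.mul_assoc A B A]
      _ = C * A := by rw [b1]
  calc B = B * A * B := b2.symm
    _ = (C * A) * B := by rw [hBA]
    _ = C * (A * B) := Matrix.mul_assoc _ _ _
    _ = C * (A * C) := by rw [hAB]
    _ = C * A * C := (Matrix.mul_assoc _ _ _).symm
    _ = C := c2

theorem mp_diag {n : Type*} [Fintype n] [DecidableEq n]
    (U : Matrix n n ℝ) (d : n → ℝ) (hU : Uᵀ * U = 1) :
    IsMoorePenrose (U * diagonal d * Uᵀ) (U * diagonal (fun i => (d i)⁻¹) * Uᵀ) := by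
  have key : ∀ e f : n → ℝ,
      (U * diagonal e * Uᵀ) * (U * diagonal f * Uᵀ) = U * diagonal (fun i => e i * f i) * Uᵀ := by
    intro e f
    calc (U * diagonal e * Uᵀ) * (U * diagonal f * Uᵀ)
        = U * diagonal e * ((Uᵀ * U) * (diagonal f * Uᵀ)) := by
          simp only [Matrix.mul_assoc]
      _ = U * (diagonal e * diagonal f) * Uᵀ := by
          rw [hU, Matrix.one_mul]; simp only [Matrix.mul_assoc]
      _ = U * diagonal (fun i => e i * f i) * Uᵀ := by
          rw [diagonal_mul_diagonal]
  have keyT : ∀ e : n → ℝ, (U * diagonal e * Uᵀ)ᵀ = U * diagonal e * Uᵀ := by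
    intro e
    rw [transpose_mul, transpose_mul, transpose_transpose, diagonal_transpose,
      Matrix.mul_assoc]
  refine ⟨?_, ?_, ?_, ?_⟩
  · rw [key, key]
    congr 2
    funext i
    by_cases h : d i = 0 <;> field_simp [h]
  · rw [key, key]
    congr 2
    funext i
    by_cases h : d i = 0 <;> field_simp [h]
  · rw [key, keyT]
  · rw [key, keyT]

/-- the vectors `g j = ∑ i, U i j • φ (z i)` satisfy
`⟨g i, g j⟩ = δ_{ij} λ j`, the orthogonal projection onto `span{g_1,…,g_s}`
represents the rank-`s` Nyström kernel `k_s^Z`, and `0 ≤ k_s^Z(x,x) ≤ k(x,x)`. -/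
theorem stmt0
    {𝒳 : Type*} [MeasurableSpace 𝒳] (μ : Measure 𝒳) [IsProbabilityMeasure μ]
    {H : Type*} [NormedAddCommGroup H] [InnerProductSpace ℝ H] [CompleteSpace H]
    (φ : 𝒳 → H) (hφ : StronglyMeasurable φ)
    (k : 𝒳 → 𝒳 → ℝ) (hk : ∀ x y, k x y = ⟪φ x, φ y⟫)
    (ℓ s : ℕ) (hs : s ≤ ℓ) (Z : Fin ℓ → 𝒳)
    (G : Matrix (Fin ℓ) (Fin ℓ) ℝ) (hG : ∀ a b, G a b = k (Z a) (Z b))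
    (U : Matrix (Fin ℓ) (Fin ℓ) ℝ) (lam : Fin ℓ → ℝ)
    (hU : Uᵀ * U = 1)
    (hdecomp : G = U * Matrix.diagonal lam * Uᵀ)
    (hmono : ∀ i j : Fin ℓ, i ≤ j → lam j ≤ lam i)
    (hlam0 : ∀ i, 0 ≤ lam i)
    (Bs : Matrix (Fin ℓ) (Fin ℓ) ℝ)
    (hBs : IsMoorePenrose
      (U * Matrix.diagonal (fun i : Fin ℓ => if (i : ℕ) < s then lam i else 0) * Uᵀ) Bs)
    (ksZ : 𝒳 → 𝒳 → ℝ)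
    (hksZ : ∀ x y, ksZ x y = ∑ a, ∑ b, k x (Z a) * Bs a b * k (Z b) y)
    (g : Fin ℓ → H) (hg : ∀ j, g j = ∑ i, U i j • φ (Z i)) :
    (∀ i j, ⟪g i, g j⟫ = if i = j then lam j else 0) ∧
    (∀ P : H →L[ℝ] H,
      (∀ v ∈ Submodule.span ℝ {w | ∃ j : Fin ℓ, (j : ℕ) < s ∧ w = g j}, P v = v) →
      (∀ v, P v ∈ Submodule.span ℝ {w | ∃ j : Fin ℓ, (j : ℕ) < s ∧ w = g j}) →
      (∀ u v, ⟪P u, v⟫ = ⟪u, P v⟫) →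
      ∀ x y, ⟪φ x, P (φ y)⟫ = ksZ x y) ∧
    (∀ x, 0 ≤ ksZ x x ∧ ksZ x x ≤ k x x) := by
  classical
  set d : Fin ℓ → ℝ := fun j => if (j : ℕ) < s then lam j else 0 with hd
  set c : Fin ℓ → ℝ := fun j => (d j)⁻¹ with hc
  -- Part 1
  have hM : Uᵀ * G * U = Matrix.diagonal lam := by
    rw [hdecomp]
    have : Uᵀ * (U * Matrix.diagonal lam * Uᵀ) * U
        = (Uᵀ * U) * Matrix.diagonal lam * (Uᵀ * U) := by
      simp only [Matrix.mul_assoc]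
    rw [this, hU, Matrix.one_mul, Matrix.mul_one]
  have key1 : ∀ i j, ⟪g i, g j⟫ = (Uᵀ * G * U) i j := by
    intro i j
    rw [hg, hg, sum_inner]
    simp only [inner_sum, real_inner_smul_left, real_inner_smul_right, ← hk, ← hG,
      Matrix.mul_apply, Matrix.transpose_apply]
    rw [Finset.sum_comm]
    refine Finset.sum_congr rfl fun b _ => ?_
    rw [Finset.sum_mul]
    exact Finset.sum_congr rfl fun a _ => by ring
  have hgg : ∀ i j, ⟪g i, g j⟫ = if i = j then lam j else 0 := by
    intro i j
    rw [key1, hM, Matrix.diagonal_apply]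
    split_ifs with h
    · rw [h]
    · rfl
  have hg0 : ∀ j, lam j = 0 → g j = 0 := by
    intro j hj
    have := hgg j j
    simp [hj] at this
    exact this
  -- Bs is determined
  have hBseq : Bs = U * Matrix.diagonal c * Uᵀ :=
    mp_unique _ _ _ hBs (mp_diag U d hU)
  have hBsab : ∀ a b, Bs a b = ∑ j, U a j * (c j * U b j) := by
    intro a b
    rw [hBseq, Matrix.mul_apply]
    refine Finset.sum_congr rfl fun j _ => ?_
    rw [Matrix.mul_diagonal, Matrix.transpose_apply]
    ring
  -- inner products with g
  have hgx : ∀ x j, ⟪φ x, g j⟫ = ∑ a, U a j * k x (Z a) := by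
    intro x j
    rw [hg, inner_sum]
    simp only [real_inner_smul_right, ← hk]
  have hgy : ∀ y j, ⟪g j, φ y⟫ = ∑ b, U b j * k (Z b) y := by
    intro y j
    rw [hg, sum_inner]
    simp only [real_inner_smul_left, ← hk]
  -- kernel formula
  have hks : ∀ x y, ksZ x y = ∑ j, c j * (⟪φ x, g j⟫ * ⟪g j, φ y⟫) := by
    intro x y
    rw [hksZ]
    calc ∑ a, ∑ b, k x (Z a) * Bs a b * k (Z b) y
        = ∑ a, ∑ b, ∑ j, c j * (U a j * k x (Z a)) * (U b j * k (Z b) y) := by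
          refine Finset.sum_congr rfl fun a _ => Finset.sum_congr rfl fun b _ => ?_
          rw [hBsab, Finset.mul_sum, Finset.sum_mul]
          exact Finset.sum_congr rfl fun j _ => by ring
      _ = ∑ a, ∑ j, ∑ b, c j * (U a j * k x (Z a)) * (U b j * k (Z b) y) :=
          Finset.sum_congr rfl fun a _ => Finset.sum_comm
      _ = ∑ j, ∑ a, ∑ b, c j * (U a j * k x (Z a)) * (U b j * k (Z b) y) :=
          Finset.sum_comm
      _ = ∑ j, c j * (⟪φ x, g j⟫ * ⟪g j, φ y⟫) := by
          refine Finset.sum_congr rfl fun j _ => ?_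
          rw [hgx, hgy, Finset.sum_mul_sum, Finset.mul_sum]
          refine Finset.sum_congr rfl fun a _ => ?_
          rw [Finset.mul_sum]
          exact Finset.sum_congr rfl fun b _ => by ring
  -- projection-candidate inner products
  have hq1 : ∀ (v : H) (x : 𝒳),
      ⟪φ x, ∑ j, (c j * ⟪g j, v⟫) • g j⟫ = ∑ j, c j * (⟪φ x, g j⟫ * ⟪g j, v⟫) := by
    intro v x
    rw [inner_sum]
    simp only [real_inner_smul_right]
    exact Finset.sum_congr rfl fun j _ => by ring
  have hdlam : ∀ j : Fin ℓ, (j : ℕ) < s → lam j ≠ 0 → c j * lam j = 1 := by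
    intro j h1 h2
    simp only [hc, hd, if_pos h1]
    exact inv_mul_cancel₀ h2
  have hczero : ∀ j : Fin ℓ, ¬ ((j : ℕ) < s) → c j = 0 := by
    intro j h
    simp [hc, hd, if_neg h]
  have hgq : ∀ (v : H) (m : Fin ℓ), (m : ℕ) < s →
      ⟪g m, ∑ j, (c j * ⟪g j, v⟫) • g j⟫ = ⟪g m, v⟫ := by
    intro v m hm
    rw [inner_sum]
    simp only [real_inner_smul_right, hgg]
    rw [Finset.sum_eq_single m]
    · by_cases hl : lam m = 0
      · simp [hg0 m hl]
      · rw [if_pos rfl]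
        have h := hdlam m hm hl
        linear_combination (⟪g m, v⟫ : ℝ) * h
    · intro b _ hb
      rw [if_neg (Ne.symm hb), mul_zero]
    · intro h
      exact absurd (Finset.mem_univ m) h
  refine ⟨hgg, ?_, ?_⟩
  · -- Part 2
    intro P hP1 hP2 hP3 x y
    set S := Submodule.span ℝ {w | ∃ j : Fin ℓ, (j : ℕ) < s ∧ w = g j} with hS
    set q : H := ∑ j, (c j * ⟪g j, φ y⟫) • g j with hqdef
    have hqS : q ∈ S := by
      apply Submodule.sum_mem
      intro j _
      by_cases hj : (j : ℕ) < s
      · exact Submodule.smul_mem _ _ (Submodule.subset_span ⟨j, hj, rfl⟩)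
      · rw [hczero j hj, zero_mul, zero_smul]
        exact Submodule.zero_mem _
    have hdiffS : P (φ y) - q ∈ S := Submodule.sub_mem _ (hP2 _) hqS
    have horth : ∀ v ∈ S, ⟪v, P (φ y) - q⟫ = 0 := by
      intro v hv
      induction hv using Submodule.span_induction with
      | mem w hw =>
        obtain ⟨j, hj, rfl⟩ := hw
        rw [inner_sub_right, hgq (φ y) j hj]
        have h1 : ⟪g j, P (φ y)⟫ = ⟪g j, φ y⟫ := by
          rw [← hP3, hP1 (g j) (Submodule.subset_span ⟨j, hj, rfl⟩)]
        rw [h1, sub_self]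
      | zero => simp
      | add a b _ _ ha hb => rw [inner_add_left, ha, hb, add_zero]
      | smul r a _ ha => rw [real_inner_smul_left, ha, mul_zero]
    have hPq : P (φ y) = q := by
      have := horth _ hdiffS
      rw [sub_eq_zero.mp (inner_self_eq_zero.mp this)]
    rw [hPq, hqdef, hq1, hks]
  · -- Part 3
    intro x
    set q : H := ∑ j, (c j * ⟪g j, φ x⟫) • g j with hqdef
    have hxq : ⟪φ x, q⟫ = ksZ x x := by
      rw [hqdef, hq1, hks]
    have hqq : ⟪q, q⟫ = ⟪φ x, q⟫ := by
      rw [hqdef, sum_inner]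
      simp only [real_inner_smul_left, inner_sum, real_inner_smul_right, hgg]
      refine Finset.sum_congr rfl fun j _ => ?_
      rw [Finset.sum_eq_single j]
      · rw [if_pos rfl]
        have hsym : ⟪φ x, g j⟫ = ⟪g j, φ x⟫ := real_inner_comm _ _
        by_cases hj : (j : ℕ) < s
        · by_cases hl : lam j = 0
          · simp [hg0 j hl]
          · have h := hdlam j hj hl
            rw [hsym]
            linear_combination (c j * ⟪g j, φ x⟫ * ⟪g j, φ x⟫ : ℝ) * h
        · rw [hczero j hj]
          ring
      · intro m _ hm
        rw [if_neg (Ne.symm hm)]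
        ring
      · intro h
        exact absurd (Finset.mem_univ j) h
    have h1 : 0 ≤ ksZ x x := by
      rw [← hxq, ← hqq]
      exact real_inner_self_nonneg
    refine ⟨h1, ?_⟩
    have hexp : (0:ℝ) ≤ ⟪φ x - q, φ x - q⟫ := real_inner_self_nonneg
    rw [inner_sub_left, inner_sub_right, inner_sub_right] at hexp
    have hsym : ⟪q, φ x⟫ = ⟪φ x, q⟫ := real_inner_comm _ _
    rw [hk]
    linarith [hxq, hqq, hsym, hexp]
end

section
/- For any Z = (z_1,…,z_ℓ) ∈ 𝒳^ℓ and any s ≤ ℓ, one has the exact identity (1/ℓ) ∑_{i=1}^ℓ (k(z_i,z_i) − k_s^Z(z_i,z_i)) = (1/ℓ) ∑_{i=s+1}^ℓ λ_i, where λ_1 ≥ ⋯ ≥ λ_ℓ are the eigenvalues of the Gram matrix k(Z,Z); consequently, by Cauchy–Schwarz, ((1/ℓ) ∑_{i=1}^ℓ √(k(z_i,z_i) − k_s^Z(z_i,z_i)))² ≤ (1/ℓ) ∑_{i=s+1}^ℓ λ_i. -/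
/-! Write `d` for `λ` with the entries from index `s` on set to zero. Uniqueness of the
Moore–Penrose inverse identifies `(k(Z,Z)_s)⁺` as `U diag(d)⁺ Uᵀ` with `diag(d)⁺ = diag(d⁻¹)`
(using `0⁻¹ = 0`), so the residual Gram matrix `G - G (k(Z,Z)_s)⁺ G` is `U diag(λ - d) Uᵀ`.
Its diagonal entries are the residuals `k(z_i,z_i) - k_s^Z(z_i,z_i)`: they are nonnegative since the
matrix is positive semidefinite, and they sum to its trace `∑_{i ≥ s} λ_i`. The second claim is then
Cauchy–Schwarz applied to their square roots. -/

open scoped RealInnerProductSpace BigOperators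
open Matrix MeasureTheory

namespace IsMoorePenrose

variable {m n : Type*} [Fintype m] [Fintype n]

theorem unique {A : Matrix m n ℝ} {B C : Matrix n m ℝ}
    (hB : IsMoorePenrose A B) (hC : IsMoorePenrose A C) : B = C := by
  obtain ⟨hB1, hB2, hB3, hB4⟩ := hB
  obtain ⟨hC1, hC2, hC3, hC4⟩ := hC
  have hBA : B * A = C * A :=
    calc B * A = ((B * A) * (C * A))ᵀ := by
          rw [(show B * A * (C * A) = B * (A * C * A) by simp only [Matrix.mul_assoc]), hC1, hB4]
      _ = C * (A * B * A) := by rw [transpose_mul, hB4, hC4]; simp only [Matrix.mul_assoc]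
      _ = C * A := by rw [hB1]
  have hAB : A * B = A * C :=
    calc A * B = ((A * C) * (A * B))ᵀ := by
          rw [(show A * C * (A * B) = A * C * A * B by simp only [Matrix.mul_assoc]), hC1, hB3]
      _ = A * B * A * C := by rw [transpose_mul, hB3, hC3]; simp only [Matrix.mul_assoc]
      _ = A * C := by rw [hB1]
  calc B = B * (A * C) := by rw [← hAB, ← Matrix.mul_assoc, hB2]
    _ = C := by rw [← Matrix.mul_assoc, hBA, hC2]

end IsMoorePenrose

section Conjugation

variable {n : Type*} [Fintype n] [DecidableEq n]

theorem isMoorePenrose_diagonal (d : n → ℝ) :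
    IsMoorePenrose (diagonal d) (diagonal d⁻¹) := by
  refine ⟨?_, ?_, ?_, ?_⟩
  · simp only [diagonal_mul_diagonal, Pi.inv_apply, mul_inv_mul_cancel]
  · rw [diagonal_mul_diagonal, diagonal_mul_diagonal]
    exact congrArg diagonal (funext fun i => by simpa using mul_inv_mul_cancel (d i)⁻¹)
  all_goals simp only [diagonal_mul_diagonal, diagonal_transpose]

theorem posSemidef_conj_diagonal {e : n → ℝ} (he : 0 ≤ e) (U : Matrix n n ℝ) :
    (U * diagonal e * Uᵀ).PosSemidef := by
  simpa [conjTranspose_eq_transpose_of_trivial] using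
    (PosSemidef.diagonal he).mul_mul_conjTranspose_same U

variable {U : Matrix n n ℝ}

theorem conj_mul_conj (hU : Uᵀ * U = 1) (X Y : Matrix n n ℝ) :
    U * X * Uᵀ * (U * Y * Uᵀ) = U * (X * Y) * Uᵀ := by
  rw [(show U * X * Uᵀ * (U * Y * Uᵀ) = U * X * (Uᵀ * U) * Y * Uᵀ by
    simp only [Matrix.mul_assoc]), hU, Matrix.mul_one, Matrix.mul_assoc U]

theorem trace_conj (hU : Uᵀ * U = 1) (X : Matrix n n ℝ) : trace (U * X * Uᵀ) = trace X := by
  rw [trace_mul_cycle, hU, Matrix.one_mul]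

theorem IsMoorePenrose.conj {A B : Matrix n n ℝ} (h : IsMoorePenrose A B) (hU : Uᵀ * U = 1) :
    IsMoorePenrose (U * A * Uᵀ) (U * B * Uᵀ) := by
  obtain ⟨h1, h2, h3, h4⟩ := h
  refine ⟨?_, ?_, ?_, ?_⟩
  · rw [conj_mul_conj hU, conj_mul_conj hU, h1]
  · rw [conj_mul_conj hU, conj_mul_conj hU, h2]
  · rw [conj_mul_conj hU, transpose_mul, transpose_mul, transpose_transpose, h3]
    simp only [Matrix.mul_assoc]
  · rw [conj_mul_conj hU, transpose_mul, transpose_mul, transpose_transpose, h4]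
    simp only [Matrix.mul_assoc]

theorem conj_diagonal_sub_mul_pinv_mul (hU : Uᵀ * U = 1) (lam : n → ℝ) (p : n → Prop)
    [DecidablePred p] {B : Matrix n n ℝ}
    (hB : IsMoorePenrose (U * diagonal (fun i => if p i then lam i else 0) * Uᵀ) B) :
    U * diagonal lam * Uᵀ - U * diagonal lam * Uᵀ * B * (U * diagonal lam * Uᵀ)
      = U * diagonal (fun i => if p i then 0 else lam i) * Uᵀ := by
  set d : n → ℝ := fun i => if p i then lam i else 0
  have hcut : lam * d⁻¹ * lam = d := funext fun i => by by_cases h : p i <;> simp [d, h]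
  rw [hB.unique ((isMoorePenrose_diagonal d).conj hU), conj_mul_conj hU, conj_mul_conj hU,
    diagonal_mul_diagonal, diagonal_mul_diagonal, ← Pi.mul_def, ← Pi.mul_def, hcut,
    ← Matrix.sub_mul, ← Matrix.mul_sub, diagonal_sub]
  congr 3
  funext i
  by_cases h : p i <;> simp [d, h]

end Conjugation

theorem sq_mean_sqrt_le_mean {ι : Type*} [Fintype ι] {f : ι → ℝ} (hf : ∀ i, 0 ≤ f i) :
    (1 / Fintype.card ι * ∑ i, √(f i)) ^ 2 ≤ 1 / Fintype.card ι * ∑ i, f i := by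
  have := sum_div_card_sq_le_sum_sq_div_card (s := Finset.univ) (f := fun i => √(f i))
  rw [one_div_mul_eq_div, one_div_mul_eq_div]
  simpa [Real.sq_sqrt (hf _)] using this

theorem stmt1_general
    {𝒳 : Type*}
    (k : 𝒳 → 𝒳 → ℝ)
    (ℓ s : ℕ) (Z : Fin ℓ → 𝒳)
    (G : Matrix (Fin ℓ) (Fin ℓ) ℝ) (hG : ∀ a b, G a b = k (Z a) (Z b))
    (U : Matrix (Fin ℓ) (Fin ℓ) ℝ) (lam : Fin ℓ → ℝ)
    (hU : Uᵀ * U = 1)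
    (hdecomp : G = U * Matrix.diagonal lam * Uᵀ)
    (hlam0 : ∀ i, 0 ≤ lam i)
    (Bs : Matrix (Fin ℓ) (Fin ℓ) ℝ)
    (hBs : IsMoorePenrose
      (U * Matrix.diagonal (fun i : Fin ℓ => if (i : ℕ) < s then lam i else 0) * Uᵀ) Bs)
    (ksZ : 𝒳 → 𝒳 → ℝ)
    (hksZ : ∀ x y, ksZ x y = ∑ a, ∑ b, k x (Z a) * Bs a b * k (Z b) y) :
    (1 / ℓ : ℝ) * ∑ i, (k (Z i) (Z i) - ksZ (Z i) (Z i))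
      = (1 / ℓ : ℝ) * ∑ i ∈ Finset.univ.filter (fun i : Fin ℓ => s ≤ (i : ℕ)), lam i ∧
    ((1 / ℓ : ℝ) * ∑ i, Real.sqrt (k (Z i) (Z i) - ksZ (Z i) (Z i))) ^ 2
      ≤ (1 / ℓ : ℝ) * ∑ i ∈ Finset.univ.filter (fun i : Fin ℓ => s ≤ (i : ℕ)), lam i := by
  have hresid_mat : G - G * Bs * G
      = U * diagonal (fun i : Fin ℓ => if (i : ℕ) < s then 0 else lam i) * Uᵀ := by
    rw [hdecomp]; exact conj_diagonal_sub_mul_pinv_mul hU lam _ hBs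
  have hresid : ∀ i, k (Z i) (Z i) - ksZ (Z i) (Z i) = (G - G * Bs * G) i i := by
    intro i
    rw [Matrix.sub_apply, hG, hksZ]
    simp only [Matrix.mul_apply, Finset.sum_mul, hG]
    rw [Finset.sum_comm]
  have htail : ∑ i, (k (Z i) (Z i) - ksZ (Z i) (Z i))
      = ∑ i ∈ Finset.univ.filter (fun i : Fin ℓ => s ≤ (i : ℕ)), lam i := by
    rw [Fintype.sum_congr _ _ hresid]
    change trace (G - G * Bs * G) = _
    rw [hresid_mat, trace_conj hU, trace_diagonal, Finset.sum_filter]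
    refine Finset.sum_congr rfl fun i _ => ?_
    by_cases h : (i : ℕ) < s <;> simp [h]
  have hpsd : (G - G * Bs * G).PosSemidef := hresid_mat ▸ posSemidef_conj_diagonal
    (fun i => by by_cases h : (i : ℕ) < s <;> simp [h, hlam0 i]) U
  refine ⟨by rw [htail], ?_⟩
  rw [← htail]
  have hmean := sq_mean_sqrt_le_mean (f := fun i => k (Z i) (Z i) - ksZ (Z i) (Z i))
    fun i => by rw [hresid]; exact hpsd.diag_nonneg
  rwa [Fintype.card_fin] at hmean

/-- `(1/ℓ) ∑_i (k(z_i,z_i) − k_s^Z(z_i,z_i)) = (1/ℓ) ∑_{i=s+1}^ℓ λ_i`,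
and by Cauchy–Schwarz
`((1/ℓ) ∑_i √(k(z_i,z_i) − k_s^Z(z_i,z_i)))² ≤ (1/ℓ) ∑_{i=s+1}^ℓ λ_i`. -/
theorem stmt1
    {𝒳 : Type*} [MeasurableSpace 𝒳]
    {H : Type*} [NormedAddCommGroup H] [InnerProductSpace ℝ H]
    (φ : 𝒳 → H)
    (k : 𝒳 → 𝒳 → ℝ) (hk : ∀ x y, k x y = ⟪φ x, φ y⟫)
    (ℓ s : ℕ) (hs : s ≤ ℓ) (Z : Fin ℓ → 𝒳)
    (G : Matrix (Fin ℓ) (Fin ℓ) ℝ) (hG : ∀ a b, G a b = k (Z a) (Z b))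
    (U : Matrix (Fin ℓ) (Fin ℓ) ℝ) (lam : Fin ℓ → ℝ)
    (hU : Uᵀ * U = 1)
    (hdecomp : G = U * Matrix.diagonal lam * Uᵀ)
    (hmono : ∀ i j : Fin ℓ, i ≤ j → lam j ≤ lam i)
    (hlam0 : ∀ i, 0 ≤ lam i)
    (Bs : Matrix (Fin ℓ) (Fin ℓ) ℝ)
    (hBs : IsMoorePenrose
      (U * Matrix.diagonal (fun i : Fin ℓ => if (i : ℕ) < s then lam i else 0) * Uᵀ) Bs)
    (ksZ : 𝒳 → 𝒳 → ℝ)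
    (hksZ : ∀ x y, ksZ x y = ∑ a, ∑ b, k x (Z a) * Bs a b * k (Z b) y) :
    (1 / ℓ : ℝ) * ∑ i, (k (Z i) (Z i) - ksZ (Z i) (Z i))
      = (1 / ℓ : ℝ) * ∑ i ∈ Finset.univ.filter (fun i : Fin ℓ => s ≤ (i : ℕ)), lam i ∧
    ((1 / ℓ : ℝ) * ∑ i, Real.sqrt (k (Z i) (Z i) - ksZ (Z i) (Z i))) ^ 2
      ≤ (1 / ℓ : ℝ) * ∑ i ∈ Finset.univ.filter (fun i : Fin ℓ => s ≤ (i : ℕ)), lam i :=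
  stmt1_general k ℓ s Z G hG U lam hU hdecomp hlam0 Bs hBs ksZ hksZ
end

section
/- For every real β > 0 and every positive integer d there is a constant C = C(β,d) > 0 such that for all integers ℓ ≥ 3, setting m := ⌊(2 log ℓ)^d / β^d⌋, one has ∑_{i > m} exp(−β i^{1/d}) ≤ C (log ℓ)^{d−1} / ℓ². -/
/-!
Put `a = (m + 1) ^ (1 / d)`, so that `β a > 2 log ℓ` and `a ≤ 2 log ℓ / β + 1`. Writing
`(a ^ d + j) ^ (1 / d) = a + t`, we have `j ≤ d (2 max a t) ^ (d - 1) t`, so either `t ≳ j / a ^ (d - 1)`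
or `t ≳ j ^ (1 / d)`. Hence the tail is at most `e ^ (-β a)` times a geometric series of size
`O(a ^ (d - 1))` plus a convergent stretched-exponential series, i.e. `O(ℓ⁻² (log ℓ) ^ (d - 1))`.
-/

open Real Filter Topology

lemma pow_add_sub_pow_le {a t : ℝ} (ha : 0 ≤ a) (ht : 0 ≤ t) (d : ℕ) :
    (a + t) ^ d - a ^ d ≤ d * (2 * max a t) ^ (d - 1) * t := by
  have h := abs_pow_sub_pow_le (a + t) a d
  rw [abs_of_nonneg (sub_nonneg.2 (pow_le_pow_left₀ ha (by linarith) d)), add_sub_cancel_left,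
    abs_of_nonneg ht, abs_of_nonneg (by linarith), abs_of_nonneg ha,
    max_eq_left (by linarith)] at h
  calc (a + t) ^ d - a ^ d ≤ t * d * (a + t) ^ (d - 1) := h
    _ = d * (a + t) ^ (d - 1) * t := by ring
    _ ≤ d * (2 * max a t) ^ (d - 1) * t := by
      rw [two_mul]
      gcongr
      exacts [le_max_left a t, le_max_right a t]

lemma summable_exp_neg_mul_nat {s : ℝ} (hs : 0 < s) : Summable (fun j : ℕ => exp (-s * j)) := by
  simpa only [mul_comm] using summable_exp_nat_mul_iff.2 (neg_lt_zero.2 hs)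

lemma tsum_exp_neg_mul_nat_le {s : ℝ} (hs : 0 < s) : ∑' j : ℕ, exp (-s * j) ≤ 1 + s⁻¹ := by
  have hr : exp (-s) < 1 := exp_lt_one_iff.2 (neg_lt_zero.2 hs)
  have hkey : exp (-s) * (s + 1) ≤ 1 := by
    rw [exp_neg, inv_mul_le_one₀ (exp_pos s)]; exact add_one_le_exp s
  simp_rw [mul_comm (-s), exp_nat_mul]
  rw [tsum_geometric_of_lt_one (exp_nonneg _) hr, inv_le_iff_one_le_mul₀ (sub_pos.2 hr)]
  field_simp
  nlinarith

lemma summable_exp_neg_mul_rpow {c p : ℝ} (hc : 0 < c) (hp : 0 < p) :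
    Summable (fun j : ℕ => exp (-c * (j : ℝ) ^ p)) := by
  have hlim : Tendsto (fun j : ℕ => (j : ℝ) ^ (2 : ℝ) * exp (-c * (j : ℝ) ^ p)) atTop (𝓝 0) := by
    have := (tendsto_rpow_mul_exp_neg_mul_atTop_nhds_zero (2 / p) c hc).comp
      ((tendsto_rpow_atTop hp).comp tendsto_natCast_atTop_atTop)
    refine this.congr fun j => ?_
    simp only [Function.comp_apply]
    rw [← rpow_mul (Nat.cast_nonneg j), mul_div_cancel₀ _ hp.ne']
  refine summable_of_isBigO_nat (summable_nat_rpow.2 (by norm_num : (-2 : ℝ) < -1)) ?_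
  refine Asymptotics.IsBigO.of_bound 1 ?_
  filter_upwards [hlim.eventually (ge_mem_nhds one_pos), eventually_ge_atTop 1] with j hj hj1
  have hj0 : (0 : ℝ) < j := by exact_mod_cast hj1
  rw [norm_of_nonneg (exp_nonneg _), norm_of_nonneg (rpow_nonneg hj0.le _), one_mul,
    rpow_neg hj0.le, ← one_div, le_div_iff₀ (rpow_pos_of_pos hj0 _), mul_comm]
  exact hj

/-- Writing `(a ^ d + j) ^ (1 / d) = a + t`, the gap `t` is at least `j / (d (2a) ^ (d - 1))` while
`t ≤ a`, and at least `j ^ (1 / d) / (2d)` once `t ≥ a`. -/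
lemma exp_neg_mul_rpow_add_le {β a j : ℝ} {d : ℕ} (hβ : 0 ≤ β) (hd : d ≠ 0) (ha : 0 < a)
    (hj : 0 ≤ j) :
    exp (-β * (a ^ d + j) ^ (d⁻¹ : ℝ)) ≤
      exp (-β * a) * (exp (-(β / (d * (2 * a) ^ (d - 1))) * j) +
        exp (-(β / (2 * d)) * j ^ (d⁻¹ : ℝ))) := by
  set b := (a ^ d + j) ^ (d⁻¹ : ℝ)
  have hb : b ^ d = a ^ d + j := rpow_inv_natCast_pow (by positivity) hd
  have hab : a ≤ b := le_of_pow_le_pow_left₀ hd (by positivity) (by linarith)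
  have hgap : j ≤ d * (2 * max a (b - a)) ^ (d - 1) * (b - a) := by
    have := pow_add_sub_pow_le ha.le (sub_nonneg.2 hab) d
    rwa [add_sub_cancel, hb, add_sub_cancel_left] at this
  have hd1 : (1 : ℝ) ≤ d := by exact_mod_cast Nat.one_le_iff_ne_zero.2 hd
  suffices h : β / (d * (2 * a) ^ (d - 1)) * j ≤ β * (b - a) ∨
      β / (2 * d) * j ^ (d⁻¹ : ℝ) ≤ β * (b - a) by
    have hsplit : exp (-β * b) = exp (-β * a) * exp (-(β * (b - a))) := by
      rw [← exp_add]; ring_nf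
    rw [hsplit]
    gcongr
    rcases h with h | h
    · exact le_add_of_le_of_nonneg (exp_le_exp.2 (by linarith)) (exp_nonneg _)
    · exact le_add_of_nonneg_of_le (exp_nonneg _) (exp_le_exp.2 (by linarith))
  rcases le_total (b - a) a with hsmall | hlarge
  · left
    rw [max_eq_left hsmall] at hgap
    rw [div_mul_eq_mul_div, div_le_iff₀ (by positivity)]
    nlinarith
  · right
    rw [max_eq_right hlarge] at hgap
    have hjd : j ≤ (2 * d * (b - a)) ^ d := by
      calc j ≤ d * (2 * (b - a)) ^ (d - 1) * (b - a) := hgap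
        _ = (2 * (b - a)) ^ (d - 1) * (d * (b - a)) := by ring
        _ ≤ (2 * d * (b - a)) ^ (d - 1) * (2 * d * (b - a)) := by
          have hba : 0 ≤ b - a := by linarith
          gcongr (?_ : ℝ) ^ _ * ?_ <;> nlinarith
        _ = (2 * d * (b - a)) ^ d := by
          rw [← pow_succ, Nat.sub_add_cancel (Nat.one_le_iff_ne_zero.2 hd)]
    have hroot : j ^ (d⁻¹ : ℝ) ≤ 2 * d * (b - a) := by
      calc j ^ (d⁻¹ : ℝ) ≤ ((2 * d * (b - a)) ^ d) ^ (d⁻¹ : ℝ) := by gcongr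
        _ = 2 * d * (b - a) := pow_rpow_inv_natCast (by nlinarith) hd
    rw [div_mul_eq_mul_div, div_le_iff₀ (by positivity)]
    nlinarith

lemma tsum_exp_neg_mul_rpow_add_le {β a : ℝ} {d : ℕ} (hβ : 0 < β) (hd : d ≠ 0) (ha : 1 ≤ a) :
    ∑' j : ℕ, exp (-β * (a ^ d + j) ^ (d⁻¹ : ℝ)) ≤
      exp (-β * a) * ((1 + d * 2 ^ (d - 1) / β +
        ∑' j : ℕ, exp (-(β / (2 * d)) * (j : ℝ) ^ (d⁻¹ : ℝ))) * a ^ (d - 1)) := by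
  set T := ∑' j : ℕ, exp (-(β / (2 * d)) * (j : ℝ) ^ (d⁻¹ : ℝ))
  have hs : 0 < β / (d * (2 * a) ^ (d - 1)) := by positivity
  have hgeom := summable_exp_neg_mul_nat hs
  have hstretched := summable_exp_neg_mul_rpow (c := β / (2 * d)) (by positivity)
    (by positivity : (0 : ℝ) < (d : ℝ)⁻¹)
  have hbound (j : ℕ) :=
    exp_neg_mul_rpow_add_le hβ.le hd (by positivity : 0 < a) (Nat.cast_nonneg j)
  have hmajorant := (hgeom.add hstretched).mul_left (exp (-β * a))
  have hA := one_le_pow₀ (n := d - 1) ha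
  have hTA := le_mul_of_one_le_right (tsum_nonneg fun _ => exp_nonneg _ : 0 ≤ T) hA
  calc ∑' j : ℕ, exp (-β * (a ^ d + j) ^ (d⁻¹ : ℝ))
      ≤ ∑' j : ℕ, exp (-β * a) * (exp (-(β / (d * (2 * a) ^ (d - 1))) * j) +
          exp (-(β / (2 * d)) * (j : ℝ) ^ (d⁻¹ : ℝ))) :=
        (hmajorant.of_nonneg_of_le (fun _ => exp_nonneg _) hbound).tsum_le_tsum hbound hmajorant
    _ = exp (-β * a) * (∑' j : ℕ, exp (-(β / (d * (2 * a) ^ (d - 1))) * j) + T) := by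
        rw [tsum_mul_left, hgeom.tsum_add hstretched]
    _ ≤ exp (-β * a) * (1 + d * 2 ^ (d - 1) / β * a ^ (d - 1) + T) := by
        gcongr
        exact (tsum_exp_neg_mul_nat_le hs).trans_eq (by rw [inv_div, mul_pow]; ring)
    _ ≤ _ := by
        gcongr
        linarith [add_mul (1 + d * 2 ^ (d - 1) / β) T (a ^ (d - 1))]

lemma rpow_inv_floor_pow_add_one_mem_Ioc {u : ℝ} (hu : 0 ≤ u) {d : ℕ} (hd : d ≠ 0) :
    ((⌊u ^ d⌋₊ + 1 : ℕ) : ℝ) ^ (d⁻¹ : ℝ) ∈ Set.Ioc u (u + 1) := by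
  set a := ((⌊u ^ d⌋₊ + 1 : ℕ) : ℝ) ^ (d⁻¹ : ℝ)
  have ha : 0 ≤ a := by positivity
  have had : a ^ d = ⌊u ^ d⌋₊ + 1 := by
    rw [rpow_inv_natCast_pow (by positivity) hd]; push_cast; rfl
  refine ⟨lt_of_pow_lt_pow_left₀ d ha ?_, le_of_pow_le_pow_left₀ hd (by positivity) ?_⟩
  · rw [had]; exact Nat.lt_floor_add_one _
  · calc a ^ d ≤ u ^ d + 1 ^ d := by
          rw [had, one_pow]; gcongr; exact Nat.floor_le (by positivity)
      _ ≤ (u + 1) ^ d := pow_add_pow_le hu zero_le_one hd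

/-- for every `β > 0` and positive integer `d` there is `C > 0`
such that for all `ℓ ≥ 3`, with `m = ⌊(2 log ℓ)^d / β^d⌋`, the tail sum
`∑_{i>m} exp(−β i^{1/d})` is at most `C (log ℓ)^{d−1} / ℓ²`. -/
theorem stmt5 (β : ℝ) (hβ : 0 < β) (d : ℕ) (hd : 1 ≤ d) :
    ∃ C : ℝ, 0 < C ∧ ∀ ℓ : ℕ, 3 ≤ ℓ →
      (∑' j : ℕ, Real.exp
          (-β * (((⌊(2 * Real.log ℓ) ^ d / β ^ d⌋₊ + 1 + j : ℕ) : ℝ) ^ ((1 : ℝ) / d))))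
        ≤ C * (Real.log ℓ) ^ (d - 1) / (ℓ : ℝ) ^ 2 := by
  have hd0 : d ≠ 0 := Nat.one_le_iff_ne_zero.1 hd
  set T := ∑' j : ℕ, exp (-(β / (2 * d)) * (j : ℝ) ^ (d⁻¹ : ℝ))
  have hT : 0 ≤ T := tsum_nonneg fun _ => exp_nonneg _
  refine ⟨(1 + d * 2 ^ (d - 1) / β + T) * (2 / β + 1) ^ (d - 1), by positivity, fun ℓ hℓ => ?_⟩
  have hℓ0 : (0 : ℝ) < ℓ := by positivity
  have hlog : 1 ≤ log ℓ := by
    rw [le_log_iff_exp_le hℓ0]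
    exact (exp_one_lt_d9.trans (by norm_num : _ < (3 : ℝ))).le.trans (by exact_mod_cast hℓ)
  obtain ⟨hua, hau⟩ := rpow_inv_floor_pow_add_one_mem_Ioc (u := 2 * log ℓ / β) (by positivity) hd0
  set a := ((⌊(2 * log ℓ / β) ^ d⌋₊ + 1 : ℕ) : ℝ) ^ (d⁻¹ : ℝ)
  have ha1 : 1 ≤ a := one_le_rpow (by simp) (by positivity)
  have hexp : exp (-β * a) ≤ ((ℓ : ℝ) ^ 2)⁻¹ := by
    rw [← exp_log (pow_pos hℓ0 2), ← exp_neg, log_pow]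
    gcongr
    rw [div_lt_iff₀ hβ] at hua
    push_cast; linarith
  have hpow : a ^ (d - 1) ≤ (2 / β + 1) ^ (d - 1) * log ℓ ^ (d - 1) := by
    rw [← mul_pow]
    gcongr
    calc a ≤ 2 * log ℓ / β + 1 := hau
      _ ≤ (2 / β + 1) * log ℓ := by rw [mul_div_right_comm, add_mul]; gcongr; linarith
  calc _ = ∑' j : ℕ, exp (-β * (a ^ d + j) ^ (d⁻¹ : ℝ)) := by
        rw [rpow_inv_natCast_pow (by positivity) hd0, ← div_pow, one_div]
        push_cast; rfl
    _ ≤ exp (-β * a) * ((1 + d * 2 ^ (d - 1) / β + T) * a ^ (d - 1)) :=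
        tsum_exp_neg_mul_rpow_add_le hβ hd0 ha1
    _ ≤ ((ℓ : ℝ) ^ 2)⁻¹ * ((1 + d * 2 ^ (d - 1) / β + T) *
          ((2 / β + 1) ^ (d - 1) * log ℓ ^ (d - 1))) := by
        gcongr
    _ = _ := by ring
end

section
/- Let Z = (z_1,…,z_ℓ) ∈ 𝒳^ℓ be any fixed tuple, let P_Z denote the orthogonal projection of H onto span{φ(z_1),…,φ(z_ℓ)}, and P_Z^⊥ := I − P_Z. Then ∫_𝒳 (k(x,x) − k^Z(x,x)) dμ(x) = ∫_𝒳 ‖P_Z^⊥ φ(x)‖_H² dμ(x) = ∑_{i=1}^∞ σ_i ‖P_Z^⊥ h_i‖_H², and for every integer m ≥ 0 this quantity is at most ∑_{i=1}^m σ_i ‖P_Z^⊥ h_i‖_H² + ∑_{i>m} σ_i. (The quantity σ_i ‖P_Z^⊥ h_i‖² equals ‖P_Z^⊥ 𝒦 e_i‖², where 𝒦 e_i corresponds to √σ_i h_i.) -/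
open scoped RealInnerProductSpace BigOperators
open Matrix MeasureTheory

/-! Since `k(Z,Z)` is the Gram matrix of the `φ(z_a)` and `G G⁺ G = G`, one has
`k^Z(x,x) = ‖P_Z φ(x)‖²`, so Pythagoras turns `k(x,x) - k^Z(x,x)` into `‖P_Z^⊥ φ(x)‖²`.
Expanding `φ(x) = ∑ ⟪h_i, φ(x)⟫ h_i` and integrating `‖P_Z^⊥ (∑_{i<n} ⟪h_i, φ(x)⟫ h_i)‖²`,
the cross terms vanish because the coordinates `⟪h_i, φ⟫` are uncorrelated; dominated convergence,
with dominating function `‖φ‖² = k(x,x)`, lets `n → ∞`. The same expansion with the identity in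
place of `P_Z^⊥` gives `∑ σ_i = ∫ k(x,x) dμ`, and the tail bound is `‖P_Z^⊥ h_i‖ ≤ ‖h_i‖ = 1`. -/

section Projection

variable {H : Type*} [NormedAddCommGroup H] [InnerProductSpace ℝ H]
  {K : Submodule ℝ H} {P : H →L[ℝ] H}

theorem inner_sub_apply_eq_zero_of_symm (hfix : ∀ v ∈ K, P v = v) (hrange : ∀ v, P v ∈ K)
    (hsym : ∀ u v, ⟪P u, v⟫ = ⟪u, P v⟫) (v : H) {w : H} (hw : w ∈ K) :
    ⟪v - P v, w⟫ = 0 := by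
  rw [← hfix w hw, ← hsym, map_sub, hfix _ (hrange v), sub_self, inner_zero_left]

theorem norm_sq_eq_norm_sub_apply_sq_add_of_symm (hfix : ∀ v ∈ K, P v = v)
    (hrange : ∀ v, P v ∈ K) (hsym : ∀ u v, ⟪P u, v⟫ = ⟪u, P v⟫) (v : H) :
    ‖v‖ ^ 2 = ‖v - P v‖ ^ 2 + ‖P v‖ ^ 2 := by
  simpa only [sub_add_cancel, ← sq] using norm_add_sq_eq_norm_sq_add_norm_sq_real
    (inner_sub_apply_eq_zero_of_symm hfix hrange hsym v (hrange v))

theorem norm_sub_apply_le_of_symm (hfix : ∀ v ∈ K, P v = v)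
    (hrange : ∀ v, P v ∈ K) (hsym : ∀ u v, ⟪P u, v⟫ = ⟪u, P v⟫) (v : H) :
    ‖v - P v‖ ≤ ‖v‖ := by
  have hpyth := norm_sq_eq_norm_sub_apply_sq_add_of_symm hfix hrange hsym v
  exact (pow_le_pow_iff_left₀ (norm_nonneg _) (norm_nonneg _) two_ne_zero).1
    (by nlinarith [sq_nonneg ‖P v‖])

end Projection

section Gram

variable {H : Type*} [NormedAddCommGroup H] [InnerProductSpace ℝ H]

theorem sum_inner_mul_mul_inner_eq_norm_sq {ι : Type*} [Fintype ι] (v : ι → H)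
    {G B : Matrix ι ι ℝ} (hG : ∀ a b, G a b = ⟪v a, v b⟫) (hGBG : G * B * G = G)
    {u w : H} (hw : w ∈ Submodule.span ℝ (Set.range v)) (hperp : ∀ a, ⟪u - w, v a⟫ = 0) :
    ∑ a, ∑ b, ⟪u, v a⟫ * B a b * ⟪v b, u⟫ = ‖w‖ ^ 2 := by
  obtain ⟨α, rfl⟩ := (Submodule.mem_span_range_iff_exists_fun ℝ).1 hw
  have hGα : ∀ a, (G *ᵥ α) a = ⟪v a, ∑ b, α b • v b⟫ := fun a => by
    simp only [mulVec, dotProduct, hG, inner_sum, real_inner_smul_right, mul_comm]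
  have hc : (fun a => ⟪u, v a⟫) = G *ᵥ α := by
    funext a
    rw [hGα, real_inner_comm _ (v a), ← sub_eq_zero, ← inner_sub_left, hperp]
  have hGT : Gᵀ = G := by ext a b; simp only [transpose_apply, hG, real_inner_comm]
  calc ∑ a, ∑ b, ⟪u, v a⟫ * B a b * ⟪v b, u⟫
      = (fun a => ⟪u, v a⟫) ⬝ᵥ (B *ᵥ fun a => ⟪u, v a⟫) := by
        simp only [dotProduct, mulVec, Finset.mul_sum, real_inner_comm u]
        exact Finset.sum_congr rfl fun a _ => Finset.sum_congr rfl fun b _ => by ring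
    _ = α ⬝ᵥ (Gᵀ *ᵥ (B *ᵥ (G *ᵥ α))) := by rw [hc, dotProduct_mulVec α Gᵀ, vecMul_transpose]
    _ = α ⬝ᵥ (G * B * G) *ᵥ α := by rw [hGT, mulVec_mulVec, mulVec_mulVec]
    _ = ‖∑ b, α b • v b‖ ^ 2 := by
        rw [hGBG, ← real_inner_self_eq_norm_sq, sum_inner]
        simp only [dotProduct, hGα, real_inner_smul_left]

theorem norm_sq_sub_sum_inner_mul_mul_inner_eq {ι : Type*} [Fintype ι] {v : ι → H}
    {G B : Matrix ι ι ℝ} (hG : ∀ a b, G a b = ⟪v a, v b⟫) (hGBG : G * B * G = G)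
    {P : H →L[ℝ] H} (hfix : ∀ w ∈ Submodule.span ℝ (Set.range v), P w = w)
    (hrange : ∀ w, P w ∈ Submodule.span ℝ (Set.range v)) (hsym : ∀ u w, ⟪P u, w⟫ = ⟪u, P w⟫)
    (u : H) : ‖u‖ ^ 2 - ∑ a, ∑ b, ⟪u, v a⟫ * B a b * ⟪v b, u⟫ = ‖u - P u‖ ^ 2 := by
  rw [sum_inner_mul_mul_inner_eq_norm_sq v hG hGBG (hrange u) fun a =>
      inner_sub_apply_eq_zero_of_symm hfix hrange hsym u (Submodule.subset_span ⟨a, rfl⟩),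
    norm_sq_eq_norm_sub_apply_sq_add_of_symm hfix hrange hsym u, add_sub_cancel_right]

end Gram

theorem Orthonormal.norm_sum_inner_smul_le {E ι : Type*} [NormedAddCommGroup E]
    [InnerProductSpace ℝ E] {v : ι → E} (hv : Orthonormal ℝ v) (s : Finset ι) (x : E) :
    ‖∑ i ∈ s, ⟪v i, x⟫ • v i‖ ≤ ‖x‖ := by
  refine (pow_le_pow_iff_left₀ (norm_nonneg _) (norm_nonneg _) two_ne_zero).1 ?_
  rw [← real_inner_self_eq_norm_sq, hv.inner_sum]
  simpa only [conj_trivial, Real.norm_eq_abs, sq, abs_mul_abs_self] using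
    hv.sum_inner_products_le x

theorem Orthonormal.hasSum_inner_smul_of_mem_closure_span {𝕜 E ι : Type*} [RCLike 𝕜]
    [NormedAddCommGroup E] [InnerProductSpace 𝕜 E] [CompleteSpace E] {v : ι → E}
    (hv : Orthonormal 𝕜 v) {x : E}
    (hx : x ∈ (Submodule.span 𝕜 (Set.range v)).topologicalClosure) :
    HasSum (fun i => (inner 𝕜 (v i) x) • v i) x := by
  set S := Submodule.span 𝕜 (Set.range v)
  set U := S.topologicalClosure
  have : CompleteSpace U := S.isClosed_topologicalClosure.completeSpace_coe
  let v' : ι → U := fun i => ⟨v i, S.le_topologicalClosure (Submodule.subset_span ⟨i, rfl⟩)⟩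
  have hv' : Orthonormal 𝕜 v' := by
    classical
    rw [orthonormal_iff_ite] at hv ⊢
    exact hv
  have hdense : ⊤ ≤ (Submodule.span 𝕜 (Set.range v')).topologicalClosure := by
    intro u _
    have himage : U.subtype '' (Submodule.span 𝕜 (Set.range v') : Set U) = S := by
      rw [← Submodule.map_coe, Submodule.map_span, ← Set.range_comp]
      rfl
    exact closure_subtype.2 (himage ▸ u.2)
  have hsumU := (HilbertBasis.mk hv' hdense).hasSum_orthogonalProjectionOnto x
  simpa [Submodule.orthogonalProjectionOnto_mem_subspace_eq_self (⟨x, hx⟩ : U)] using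
    U.subtypeL.hasSum hsumU

section Integral

variable {X E F : Type*} [MeasurableSpace X] {μ : Measure X}
  [NormedAddCommGroup E] [InnerProductSpace ℝ E] [NormedAddCommGroup F] [InnerProductSpace ℝ F]
  {φ : X → E}

theorem integrable_inner_mul_inner (hφ : AEStronglyMeasurable φ μ)
    (hint : Integrable (fun x => ‖φ x‖ ^ 2) μ) (u w : E) :
    Integrable (fun x => ⟪u, φ x⟫ * ⟪w, φ x⟫) μ := by
  refine (hint.const_mul (‖u‖ * ‖w‖)).mono'
    (((innerSL ℝ u).continuous.comp_aestronglyMeasurable hφ).mul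
      ((innerSL ℝ w).continuous.comp_aestronglyMeasurable hφ)) (ae_of_all _ fun x => ?_)
  rw [norm_mul]
  calc ‖⟪u, φ x⟫‖ * ‖⟪w, φ x⟫‖ ≤ (‖u‖ * ‖φ x‖) * (‖w‖ * ‖φ x‖) :=
        mul_le_mul (norm_inner_le_norm _ _) (norm_inner_le_norm _ _) (norm_nonneg _)
          (by positivity)
    _ = ‖u‖ * ‖w‖ * ‖φ x‖ ^ 2 := by ring

theorem integral_norm_sq_map_sum_inner_smul {ι : Type*} (hφ : AEStronglyMeasurable φ μ)
    (hint : Integrable (fun x => ‖φ x‖ ^ 2) μ) (h : ι → E)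
    (horth : ∀ i j, i ≠ j → ∫ x, ⟪h i, φ x⟫ * ⟪h j, φ x⟫ ∂μ = 0) (T : E →L[ℝ] F)
    (s : Finset ι) :
    ∫ x, ‖T (∑ i ∈ s, ⟪h i, φ x⟫ • h i)‖ ^ 2 ∂μ =
      ∑ i ∈ s, (∫ x, ⟪h i, φ x⟫ ^ 2 ∂μ) * ‖T (h i)‖ ^ 2 := by
  have hexpand : ∀ x, ‖T (∑ i ∈ s, ⟪h i, φ x⟫ • h i)‖ ^ 2 =
      ∑ i ∈ s, ∑ j ∈ s, ⟪h i, φ x⟫ * ⟪h j, φ x⟫ * ⟪T (h i), T (h j)⟫ := fun x => by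
    rw [← real_inner_self_eq_norm_sq, map_sum, sum_inner]
    simp only [inner_sum, map_smul, real_inner_smul_left, real_inner_smul_right]
    exact Finset.sum_congr rfl fun i _ => Finset.sum_congr rfl fun j _ => by ring
  have hint' := fun i j => (integrable_inner_mul_inner hφ hint (h i) (h j)).mul_const
    ⟪T (h i), T (h j)⟫
  calc ∫ x, ‖T (∑ i ∈ s, ⟪h i, φ x⟫ • h i)‖ ^ 2 ∂μ
      = ∑ i ∈ s, ∑ j ∈ s, (∫ x, ⟪h i, φ x⟫ * ⟪h j, φ x⟫ ∂μ) * ⟪T (h i), T (h j)⟫ := by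
        simp only [hexpand]
        rw [integral_finsetSum _ fun i _ => integrable_finsetSum _ fun j _ => hint' i j]
        refine Finset.sum_congr rfl fun i _ => ?_
        rw [integral_finsetSum _ fun j _ => hint' i j]
        exact Finset.sum_congr rfl fun j _ => integral_mul_const _ _
    _ = ∑ i ∈ s, (∫ x, ⟪h i, φ x⟫ * ⟪h i, φ x⟫ ∂μ) * ⟪T (h i), T (h i)⟫ :=
        Finset.sum_congr rfl fun i hi => Finset.sum_eq_single_of_mem i hi
          fun j _ hji => by rw [horth i j hji.symm, zero_mul]
    _ = ∑ i ∈ s, (∫ x, ⟪h i, φ x⟫ ^ 2 ∂μ) * ‖T (h i)‖ ^ 2 := by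
        simp only [sq, real_inner_self_eq_norm_mul_norm]

theorem hasSum_integral_norm_sq_map [CompleteSpace E] (hφ : AEStronglyMeasurable φ μ)
    (hint : Integrable (fun x => ‖φ x‖ ^ 2) μ) {h : ℕ → E} (hon : Orthonormal ℝ h)
    (hspan : ∀ᵐ x ∂μ, φ x ∈ (Submodule.span ℝ (Set.range h)).topologicalClosure)
    (horth : ∀ i j, i ≠ j → ∫ x, ⟪h i, φ x⟫ * ⟪h j, φ x⟫ ∂μ = 0) (T : E →L[ℝ] F) :
    HasSum (fun i => (∫ x, ⟪h i, φ x⟫ ^ 2 ∂μ) * ‖T (h i)‖ ^ 2) (∫ x, ‖T (φ x)‖ ^ 2 ∂μ) := by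
  rw [hasSum_iff_tendsto_nat_of_nonneg
    fun i => mul_nonneg (integral_nonneg fun x => sq_nonneg _) (sq_nonneg _)]
  simp only [← integral_norm_sq_map_sum_inner_smul hφ hint h horth T]
  refine tendsto_integral_of_dominated_convergence (fun x => ‖T‖ ^ 2 * ‖φ x‖ ^ 2)
    (fun n => ?_) (hint.const_mul _) (fun n => ae_of_all _ fun x => ?_) ?_
  · refine (T.continuous.comp_aestronglyMeasurable ?_).norm.pow 2
    exact Finset.aestronglyMeasurable_fun_sum _ fun i _ =>
      ((innerSL ℝ (h i)).continuous.comp_aestronglyMeasurable hφ).smul_const _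
  · rw [norm_pow, norm_norm, ← mul_pow]
    gcongr
    exact T.le_opNorm_of_le (hon.norm_sum_inner_smul_le _ _)
  · filter_upwards [hspan] with x hx
    exact ((T.continuous.norm.pow 2).tendsto (φ x)).comp
      (hon.hasSum_inner_smul_of_mem_closure_span hx).tendsto_sum_nat

end Integral

/-- Indices start at `0`: `σ 0` is the first Mercer eigenvalue. -/
theorem stmt6_general
    {𝒳 : Type*} [MeasurableSpace 𝒳] (μ : Measure 𝒳)
    {H : Type*} [NormedAddCommGroup H] [InnerProductSpace ℝ H] [CompleteSpace H]
    (φ : 𝒳 → H) (hφ : StronglyMeasurable φ)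
    (k : 𝒳 → 𝒳 → ℝ) (hk : ∀ x y, k x y = ⟪φ x, φ y⟫)
    (hkint : Integrable (fun x => k x x) μ)
    (h : ℕ → H) (hon : Orthonormal ℝ h)
    (hspan : ∀ x, φ x ∈ (Submodule.span ℝ (Set.range h)).topologicalClosure)
    (horth : ∀ i j, i ≠ j → ∫ x, ⟪h i, φ x⟫ * ⟪h j, φ x⟫ ∂μ = 0)
    (σ : ℕ → ℝ) (hσ : ∀ i, σ i = ∫ x, ⟪h i, φ x⟫ ^ 2 ∂μ)
    (ℓ : ℕ) (Z : Fin ℓ → 𝒳)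
    (G : Matrix (Fin ℓ) (Fin ℓ) ℝ) (hG : ∀ a b, G a b = k (Z a) (Z b))
    (Kp : Matrix (Fin ℓ) (Fin ℓ) ℝ) (hKp : IsMoorePenrose G Kp)
    (kZ : 𝒳 → 𝒳 → ℝ)
    (hkZ : ∀ x y, kZ x y = ∑ a, ∑ b, k x (Z a) * Kp a b * k (Z b) y)
    (P : H →L[ℝ] H)
    (hfix : ∀ a, P (φ (Z a)) = φ (Z a))
    (hrange : ∀ v, P v ∈ Submodule.span ℝ (Set.range fun a => φ (Z a)))
    (hsym : ∀ u v, ⟪P u, v⟫ = ⟪u, P v⟫) :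
    (∫ x, (k x x - kZ x x) ∂μ) = (∫ x, ‖φ x - P (φ x)‖ ^ 2 ∂μ) ∧
    (∫ x, (k x x - kZ x x) ∂μ) = (∑' i : ℕ, σ i * ‖h i - P (h i)‖ ^ 2) ∧
    ∀ m : ℕ, (∫ x, (k x x - kZ x x) ∂μ)
      ≤ (∑ i ∈ Finset.range m, σ i * ‖h i - P (h i)‖ ^ 2) + ∑' i : ℕ, σ (m + i) := by
  have hPfix : ∀ v ∈ Submodule.span ℝ (Set.range fun a => φ (Z a)), P v = v :=
    fun v hv => LinearMap.eqOn_span' (f := P.toLinearMap) (g := LinearMap.id)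
      (by rintro _ ⟨a, rfl⟩; exact hfix a) hv
  have hkxx : ∀ x, k x x = ‖φ x‖ ^ 2 := fun x => by rw [hk, real_inner_self_eq_norm_sq]
  have hkernel : ∀ x, k x x - kZ x x = ‖φ x - P (φ x)‖ ^ 2 := fun x => by
    simpa only [hkZ, hk, real_inner_self_eq_norm_sq] using
      norm_sq_sub_sum_inner_mul_mul_inner_eq (fun a b => (hG a b).trans (hk _ _)) hKp.1
        hPfix hrange hsym (φ x)
  have hint : Integrable (fun x => ‖φ x‖ ^ 2) μ := by simpa only [hkxx] using hkint
  have hexpansion := hasSum_integral_norm_sq_map (F := H) hφ.aestronglyMeasurable hint hon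
    (ae_of_all _ hspan) horth
  have hσsum : Summable σ := by
    simpa only [← hσ, ContinuousLinearMap.id_apply, hon.1, one_pow, mul_one] using
      (hexpansion (ContinuousLinearMap.id ℝ H)).summable
  have hres : HasSum (fun i => σ i * ‖h i - P (h i)‖ ^ 2) (∫ x, ‖φ x - P (φ x)‖ ^ 2 ∂μ) := by
    simpa only [← hσ, _root_.sub_apply, ContinuousLinearMap.id_apply] using
      hexpansion (ContinuousLinearMap.id ℝ H - P)
  have hleft : ∫ x, (k x x - kZ x x) ∂μ = ∫ x, ‖φ x - P (φ x)‖ ^ 2 ∂μ :=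
    integral_congr_ae (ae_of_all _ hkernel)
  refine ⟨hleft, hleft.trans hres.tsum_eq.symm, fun m => ?_⟩
  have hσ_nonneg : ∀ i, 0 ≤ σ i := fun i => (hσ i).symm ▸ integral_nonneg fun x => sq_nonneg _
  rw [hleft, ← hres.tsum_eq, ← hres.summable.sum_add_tsum_nat_add m]
  simp only [add_comm m]
  gcongr with i
  · exact (summable_nat_add_iff m).2 hres.summable
  · exact (summable_nat_add_iff m).2 hσsum
  · exact mul_le_of_le_one_right (hσ_nonneg _) (pow_le_one₀ (norm_nonneg _)
      ((norm_sub_apply_le_of_symm hPfix hrange hsym _).trans_eq (hon.1 _)))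

/-- for a fixed tuple `Z` and the orthogonal projection `P = P_Z`
onto `span{φ(z_1),…,φ(z_ℓ)}`,
`∫ (k(x,x) − k^Z(x,x)) dμ = ∫ ‖P_Z^⊥ φ(x)‖² dμ = ∑ σ_i ‖P_Z^⊥ h_i‖²`, and for
every `m` this is at most `∑_{i=1}^m σ_i ‖P_Z^⊥ h_i‖² + ∑_{i>m} σ_i`.
(0-indexed: `σ 0` is the first Mercer eigenvalue.) -/
theorem stmt6
    {𝒳 : Type*} [MeasurableSpace 𝒳] (μ : Measure 𝒳) [IsProbabilityMeasure μ]
    {H : Type*} [NormedAddCommGroup H] [InnerProductSpace ℝ H] [CompleteSpace H]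
    (φ : 𝒳 → H) (hφ : StronglyMeasurable φ)
    (k : 𝒳 → 𝒳 → ℝ) (hk : ∀ x y, k x y = ⟪φ x, φ y⟫)
    (hkint : Integrable (fun x => k x x) μ)
    (h : ℕ → H) (hon : Orthonormal ℝ h)
    (hspan : ∀ x, φ x ∈ (Submodule.span ℝ (Set.range h)).topologicalClosure)
    (horth : ∀ i j, i ≠ j → ∫ x, ⟪h i, φ x⟫ * ⟪h j, φ x⟫ ∂μ = 0)
    (σ : ℕ → ℝ) (hσ : ∀ i, σ i = ∫ x, ⟪h i, φ x⟫ ^ 2 ∂μ)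
    (hσmono : ∀ i j, i ≤ j → σ j ≤ σ i) (hσsum : Summable σ)
    (ℓ : ℕ) (Z : Fin ℓ → 𝒳)
    (G : Matrix (Fin ℓ) (Fin ℓ) ℝ) (hG : ∀ a b, G a b = k (Z a) (Z b))
    (Kp : Matrix (Fin ℓ) (Fin ℓ) ℝ) (hKp : IsMoorePenrose G Kp)
    (kZ : 𝒳 → 𝒳 → ℝ)
    (hkZ : ∀ x y, kZ x y = ∑ a, ∑ b, k x (Z a) * Kp a b * k (Z b) y)
    (P : H →L[ℝ] H)
    (hfix : ∀ a, P (φ (Z a)) = φ (Z a))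
    (hrange : ∀ v, P v ∈ Submodule.span ℝ (Set.range fun a => φ (Z a)))
    (hsym : ∀ u v, ⟪P u, v⟫ = ⟪u, P v⟫) :
    (∫ x, (k x x - kZ x x) ∂μ) = (∫ x, ‖φ x - P (φ x)‖ ^ 2 ∂μ) ∧
    (∫ x, (k x x - kZ x x) ∂μ) = (∑' i : ℕ, σ i * ‖h i - P (h i)‖ ^ 2) ∧
    ∀ m : ℕ, (∫ x, (k x x - kZ x x) ∂μ)
      ≤ (∑ i ∈ Finset.range m, σ i * ‖h i - P (h i)‖ ^ 2) + ∑' i : ℕ, σ (m + i) :=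
  stmt6_general μ φ hφ k hk hkint h hon hspan horth σ hσ ℓ Z G hG Kp hKp kZ hkZ P hfix hrange hsym
end

section
/- Assume additionally ∫_𝒳 k(t,t) dμ(t) < ∞. Then for all x, y ∈ 𝒳, the function t ↦ k(x,t) k(t,y) is μ-integrable and h_μ(x,y) := ∫_𝒳 k(x,t) k(t,y) dμ(t) = ∑_{i=1}^∞ σ_i² e_i(x) e_i(y), the series converging absolutely. -/
/-!
Expand `k x ·` by Mercer and integrate term by term against `k · y`. The exchange of sum and
integral is justified because `∑ |σᵢ eᵢ(x)| < ∞` (AM-GM against `∑ σᵢ` and `k(x,x)`) and the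
integrals `∫ |eᵢ k(·,y)|` are uniformly bounded, both factors being square integrable
(`k(t,y)² ≤ k(t,t) k(y,y)`). The same exchange with `eᵢ` in place of `k · y`, together with
orthonormality, gives `∫ eᵢ(t) k(t,y) dμ = σᵢ eᵢ(y)`.
-/

open scoped BigOperators
open MeasureTheory

/-- `k` is a (symmetric) positive definite kernel. -/
def IsPosDefKernel {𝒳 : Type*} (k : 𝒳 → 𝒳 → ℝ) : Prop :=
  (∀ x y, k x y = k y x) ∧
  ∀ (n : ℕ) (x : Fin n → 𝒳) (c : Fin n → ℝ),
    0 ≤ ∑ a, ∑ b, c a * c b * k (x a) (x b)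

section SquareIntegrable

variable {α : Type*} [MeasurableSpace α] {μ : Measure α} {f g : α → ℝ}

lemma abs_mul_le_add_mul_self_div_two (a b : ℝ) : |a * b| ≤ (a * a + b * b) / 2 := by
  rw [abs_mul]
  nlinarith [two_mul_le_add_sq |a| |b|, sq_abs a, sq_abs b]

lemma integrable_mul_of_integrable_mul_self (hf : AEStronglyMeasurable f μ)
    (hg : AEStronglyMeasurable g μ) (hff : Integrable (fun t => f t * f t) μ)
    (hgg : Integrable (fun t => g t * g t) μ) : Integrable (fun t => f t * g t) μ :=
  ((hff.add hgg).div_const 2).mono' (hf.mul hg)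
    (ae_of_all _ fun t => abs_mul_le_add_mul_self_div_two (f t) (g t))

lemma integral_abs_mul_le (hff : Integrable (fun t => f t * f t) μ)
    (hgg : Integrable (fun t => g t * g t) μ) :
    ∫ t, |f t * g t| ∂μ ≤ (∫ t, f t * f t ∂μ + ∫ t, g t * g t ∂μ) / 2 := by
  rw [← integral_add hff hgg, ← integral_div]
  exact integral_mono_of_nonneg (ae_of_all _ fun t => abs_nonneg _) ((hff.add hgg).div_const 2)
    (ae_of_all _ fun t => abs_mul_le_add_mul_self_div_two (f t) (g t))

end SquareIntegrable

lemma measurable_of_hasSum {α β : Type*} [MeasurableSpace α] [TopologicalSpace β]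
    [TopologicalSpace.PseudoMetrizableSpace β] [MeasurableSpace β] [BorelSpace β]
    [AddCommMonoid β] [MeasurableAdd₂ β] {φ : ℕ → α → β} {f : α → β}
    (hφ : ∀ i, Measurable (φ i)) (hf : ∀ t, HasSum (fun i => φ i t) (f t)) : Measurable f :=
  measurable_of_tendsto_metrizable (f := fun n t => ∑ i ∈ Finset.range n, φ i t)
    (fun _ => Finset.measurable_sum _ fun i _ => hφ i)
    (tendsto_pi_nhds.2 fun t => (hf t).tendsto_sum_nat)

lemma hasSum_integral_mul_of_hasSum {α : Type*} [MeasurableSpace α] {μ : Measure α}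
    {φ : ℕ → α → ℝ} {c : ℕ → ℝ} {f g : α → ℝ} {M : ℝ}
    (hf : ∀ t, HasSum (fun i => c i * φ i t) (f t)) (hc : Summable fun i => |c i|)
    (hint : ∀ i, Integrable (fun t => φ i t * g t) μ) (hM : ∀ i, ∫ t, |φ i t * g t| ∂μ ≤ M) :
    HasSum (fun i => c i * ∫ t, φ i t * g t ∂μ) (∫ t, f t * g t ∂μ) := by
  have hfg : (fun t => f t * g t) = fun t => ∑' i, c i * (φ i t * g t) := funext fun t => by
    simpa only [mul_assoc] using ((hf t).mul_right (g t)).tsum_eq.symm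
  have hnorm : ∀ i, ∫ t, ‖c i * (φ i t * g t)‖ ∂μ = |c i| * ∫ t, |φ i t * g t| ∂μ := fun i => by
    simp only [Real.norm_eq_abs, abs_mul (c i)]
    exact integral_const_mul _ _
  simp_rw [hfg, ← integral_const_mul]
  refine hasSum_integral_of_summable_integral_norm (fun i => (hint i).const_mul (c i)) ?_
  simp_rw [hnorm]
  exact (hc.mul_right M).of_nonneg_of_le
    (fun i => mul_nonneg (abs_nonneg _) (integral_nonneg fun t => abs_nonneg _))
    fun i => mul_le_mul_of_nonneg_left (hM i) (abs_nonneg _)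

lemma summable_abs_sq_mul_mul {σ a b : ℕ → ℝ} (hσ0 : ∀ i, 0 ≤ σ i) (hσ : Summable σ)
    (h : Summable fun i => |σ i * a i * b i|) : Summable fun i => |σ i ^ 2 * a i * b i| :=
  (h.mul_left (∑' j, σ j)).of_nonneg_of_le (fun _ => abs_nonneg _) fun i => by
    rw [show σ i ^ 2 * a i * b i = σ i * (σ i * a i * b i) by ring, abs_mul, abs_of_nonneg (hσ0 i)]
    exact mul_le_mul_of_nonneg_right (hσ.le_tsum i fun j _ => hσ0 j) (abs_nonneg _)

section Mercer

variable {𝒳 : Type*} {k : 𝒳 → 𝒳 → ℝ} {σ : ℕ → ℝ} {e : ℕ → 𝒳 → ℝ}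

lemma mercer_symm (hmercer : ∀ x y, HasSum (fun i => σ i * e i x * e i y) (k x y)) (x y : 𝒳) :
    k x y = k y x :=
  (hmercer x y).unique (by simpa only [mul_right_comm] using hmercer y x)

lemma mercer_diag_nonneg (hσ0 : ∀ i, 0 ≤ σ i)
    (hmercer : ∀ x y, HasSum (fun i => σ i * e i x * e i y) (k x y)) (t : 𝒳) : 0 ≤ k t t :=
  (hmercer t t).nonneg fun i => by rw [mul_assoc]; exact mul_nonneg (hσ0 i) (mul_self_nonneg _)

lemma summable_abs_mercer_coeff (hσ0 : ∀ i, 0 ≤ σ i) (hσ : Summable σ)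
    (hmercer : ∀ x y, HasSum (fun i => σ i * e i x * e i y) (k x y)) (z : 𝒳) :
    Summable fun i => |σ i * e i z| := by
  refine ((hσ.add (hmercer z z).summable).div_const 2).of_nonneg_of_le (fun _ => abs_nonneg _)
    fun i => ?_
  calc |σ i * e i z| = σ i * |1 * e i z| := by rw [one_mul, abs_mul, abs_of_nonneg (hσ0 i)]
    _ ≤ σ i * ((1 * 1 + e i z * e i z) / 2) :=
        mul_le_mul_of_nonneg_left (abs_mul_le_add_mul_self_div_two _ _) (hσ0 i)
    _ = (σ i + σ i * e i z * e i z) / 2 := by ring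

variable [MeasurableSpace 𝒳] {μ : Measure 𝒳}

lemma integral_eigenfunction_mul_mercer (hσ0 : ∀ i, 0 ≤ σ i) (hσ : Summable σ)
    (hemeas : ∀ i, Measurable (e i))
    (horth : ∀ i j, ∫ x, e i x * e j x ∂μ = if i = j then 1 else 0)
    (hmercer : ∀ x y, HasSum (fun i => σ i * e i x * e i y) (k x y)) (i : ℕ) (y : 𝒳) :
    ∫ t, e i t * k t y ∂μ = σ i * e i y := by
  have hsq : ∀ j, Integrable (fun t => e j t * e j t) μ := fun j =>
    Integrable.of_integral_ne_zero (by simp [horth])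
  have hsum := hasSum_integral_mul_of_hasSum (μ := μ) (g := e i) (M := 1)
    (fun t => (funext fun j => mul_right_comm (σ j) (e j t) (e j y)) ▸ hmercer t y)
    (summable_abs_mercer_coeff hσ0 hσ hmercer y)
    (fun j => integrable_mul_of_integrable_mul_self (hemeas j).aestronglyMeasurable
      (hemeas i).aestronglyMeasurable (hsq j) (hsq i))
    (fun j => (integral_abs_mul_le (hsq j) (hsq i)).trans_eq (by simp [horth]))
  have hterm : ∀ j, σ j * e j y * ∫ t, e j t * e i t ∂μ = if j = i then σ i * e i y else 0 := by
    intro j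
    rw [horth]
    split_ifs with h
    · rw [h, mul_one]
    · rw [mul_zero]
  rw [funext hterm] at hsum
  simp_rw [mul_comm (e i _)]
  exact hsum.unique (hasSum_ite_eq i _)

end Mercer

section CauchySchwarz

variable {𝒳 : Type*} {k : 𝒳 → 𝒳 → ℝ}

lemma abs_kernel_mul_kernel_le (hdiag : ∀ t, 0 ≤ k t t)
    (hCS : ∀ x t, |k x t| ≤ √(k x x * k t t)) (x y t : 𝒳) :
    |k x t * k t y| ≤ √(k x x) * √(k y y) * k t t := by
  have hk : ∀ s u, |k s u| ≤ √(k s s) * √(k u u) := fun s u =>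
    (hCS s u).trans_eq (Real.sqrt_mul (hdiag s) _)
  calc |k x t * k t y| = |k x t| * |k t y| := abs_mul _ _
    _ ≤ (√(k x x) * √(k t t)) * (√(k t t) * √(k y y)) :=
        mul_le_mul (hk x t) (hk t y) (abs_nonneg _) (by positivity)
    _ = √(k x x) * √(k y y) * (√(k t t) * √(k t t)) := by ring
    _ = √(k x x) * √(k y y) * k t t := by rw [Real.mul_self_sqrt (hdiag t)]

lemma integrable_kernel_mul_kernel [MeasurableSpace 𝒳] {μ : Measure 𝒳}
    (hdiag : ∀ t, 0 ≤ k t t) (hCS : ∀ x t, |k x t| ≤ √(k x x * k t t))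
    (hkint : Integrable (fun t => k t t) μ) {x y : 𝒳}
    (hmeas : AEStronglyMeasurable (fun t => k x t * k t y) μ) :
    Integrable (fun t => k x t * k t y) μ :=
  (hkint.const_mul _).mono' hmeas (ae_of_all _ (abs_kernel_mul_kernel_le hdiag hCS x y))

end CauchySchwarz

theorem stmt8_general
    {𝒳 : Type*} [MeasurableSpace 𝒳] (μ : Measure 𝒳)
    (k : 𝒳 → 𝒳 → ℝ)
    (hCS : ∀ x t, |k x t| ≤ Real.sqrt (k x x * k t t))
    (σ : ℕ → ℝ) (e : ℕ → 𝒳 → ℝ)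
    (hσ0 : ∀ i, 0 ≤ σ i) (hσsum : Summable σ)
    (hemeas : ∀ i, Measurable (e i))
    (horth : ∀ i j, ∫ x, e i x * e j x ∂μ = if i = j then 1 else 0)
    (hmercer : ∀ x y, HasSum (fun i => σ i * e i x * e i y) (k x y))
    (habs : ∀ x y, Summable fun i => |σ i * e i x * e i y|)
    (hkint : Integrable (fun t => k t t) μ) :
    ∀ x y : 𝒳,
      Integrable (fun t => k x t * k t y) μ ∧
      (Summable fun i => |σ i ^ 2 * e i x * e i y|) ∧
      (∫ t, k x t * k t y ∂μ) = ∑' i : ℕ, σ i ^ 2 * e i x * e i y := by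
  intro x y
  have hdiag := mercer_diag_nonneg hσ0 hmercer
  have hk_right : ∀ z, Measurable (k z) := fun z =>
    measurable_of_hasSum (fun i => (hemeas i).const_mul _) (hmercer z)
  have hk_left : Measurable fun t => k t y :=
    measurable_of_hasSum (fun i => ((hemeas i).const_mul _).mul_const _) fun t => hmercer t y
  have hkk : ∀ z, Integrable (fun t => k z t * k t y) μ := fun z =>
    integrable_kernel_mul_kernel hdiag hCS hkint ((hk_right z).mul hk_left).aestronglyMeasurable
  have hk_sq : Integrable (fun t => k t y * k t y) μ :=
    (hkk y).congr (ae_of_all _ fun t => by simp only [mercer_symm hmercer y t])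
  have he_sq : ∀ i, Integrable (fun t => e i t * e i t) μ := fun i =>
    Integrable.of_integral_ne_zero (by simp [horth])
  have hsum := hasSum_integral_mul_of_hasSum (μ := μ) (g := fun t => k t y)
    (M := (1 + ∫ t, k t y * k t y ∂μ) / 2) (hmercer x)
    (summable_abs_mercer_coeff hσ0 hσsum hmercer x)
    (fun i => integrable_mul_of_integrable_mul_self (hemeas i).aestronglyMeasurable
      hk_left.aestronglyMeasurable (he_sq i) hk_sq)
    (fun i => (integral_abs_mul_le (he_sq i) hk_sq).trans_eq (by simp [horth]))
  simp_rw [integral_eigenfunction_mul_mercer hσ0 hσsum hemeas horth hmercer] at hsum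
  refine ⟨hkk x, summable_abs_sq_mul_mul hσ0 hσsum (habs x y), ?_⟩
  rw [← hsum.tsum_eq]
  congr 1 with i
  ring

/-- if `∫ k(t,t) dμ(t) < ∞`, then for all `x, y` the function
`t ↦ k(x,t)k(t,y)` is `μ`-integrable and
`h_μ(x,y) = ∫ k(x,t)k(t,y) dμ(t) = ∑_i σ_i² e_i(x) e_i(y)`, the series
converging absolutely. (0-indexed Mercer eigenpairs.) -/
theorem stmt8
    {𝒳 : Type*} [MeasurableSpace 𝒳] (μ : Measure 𝒳) [IsProbabilityMeasure μ]
    (k : 𝒳 → 𝒳 → ℝ) (hpd : IsPosDefKernel k)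
    (hCS : ∀ x t, |k x t| ≤ Real.sqrt (k x x * k t t))
    (σ : ℕ → ℝ) (e : ℕ → 𝒳 → ℝ)
    (hσmono : ∀ i j, i ≤ j → σ j ≤ σ i) (hσ0 : ∀ i, 0 ≤ σ i) (hσsum : Summable σ)
    (hemeas : ∀ i, Measurable (e i))
    (horth : ∀ i j, ∫ x, e i x * e j x ∂μ = if i = j then 1 else 0)
    (hmercer : ∀ x y, HasSum (fun i => σ i * e i x * e i y) (k x y))
    (habs : ∀ x y, Summable fun i => |σ i * e i x * e i y|)
    (hkint : Integrable (fun t => k t t) μ) :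
    ∀ x y : 𝒳,
      Integrable (fun t => k x t * k t y) μ ∧
      (Summable fun i => |σ i ^ 2 * e i x * e i y|) ∧
      (∫ t, k x t * k t y ∂μ) = ∑' i : ℕ, σ i ^ 2 * e i x * e i y :=
  stmt8_general μ k hCS σ e hσ0 hσsum hemeas horth hmercer habs hkint
end

section
/- For all indices i, j with κ_i > 0 and κ_j > 0, the functions f_i belong to L²(μ) and satisfy ∫_𝒳 f_i(x) f_j(x) dμ(x) = δ_{ij}; moreover each such f_i is an eigenfunction of the integral operator of k^Z: ∫_𝒳 k^Z(x,y) f_i(y) dμ(y) = κ_i f_i(x) for μ-almost every x ∈ 𝒳. -/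
open scoped BigOperators
open Matrix MeasureTheory

/-!
Write `φ x = k(Z, x)`. For coefficient vectors `c, d`, the symmetry of `k` gives
`∫ (c ⬝ φ)(d ⬝ φ) dμ = cᵀ h_μ d = (H c) ⬝ (H d)`, so `c ⬝ φ` is determined `μ`-a.e. by `H c`.
When `κ_i > 0`, the column `v_i = κ_i⁻¹ H k(Z,Z)⁺ Hᵀ v_i` lies in the range of `H`, hence
`H H⁺ v_i = v_i`: the orthonormality of the `f_i` is then that of the columns of `V`. The integral
operator of `k^Z` sends `c ⬝ φ` to `(k(Z,Z)⁺ h_μ c) ⬝ φ`, and for `c = H⁺ v_i` this coefficient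
vector has image `H k(Z,Z)⁺ Hᵀ v_i = κ_i v_i = H (κ_i c)` under `H`.
-/

section LinearAlgebra

variable {m n : Type*} [Fintype m] [Fintype n]

theorem IsMoorePenrose.transpose_mul_self_mul {A : Matrix m n ℝ} {B : Matrix n m ℝ}
    (h : IsMoorePenrose A B) : Aᵀ * A * B = Aᵀ := by
  rw [Matrix.mul_assoc, ← h.2.2.1, ← transpose_mul, h.1]

theorem IsMoorePenrose.mul_mul_transpose_mul_self_mul {A : Matrix m n ℝ} {B : Matrix n m ℝ}
    (h : IsMoorePenrose A B) (K : Matrix n n ℝ) : A * (K * (Aᵀ * A)) * B = A * K * Aᵀ := by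
  rw [Matrix.mul_assoc, Matrix.mul_assoc, h.transpose_mul_self_mul, Matrix.mul_assoc]

theorem IsMoorePenrose.mul_mulVec_mulVec {A : Matrix m n ℝ} {B : Matrix n m ℝ}
    (h : IsMoorePenrose A B) (y : n → ℝ) : (A * B) *ᵥ (A *ᵥ y) = A *ᵥ y := by
  rw [mulVec_mulVec, h.1]

theorem IsMoorePenrose.mulVec_mulVec_eq_of_mulVec_eq_smul {A : Matrix m n ℝ} {B : Matrix n m ℝ}
    (h : IsMoorePenrose A B) {K : Matrix n n ℝ} {v : m → ℝ} {r : ℝ} (hr : r ≠ 0)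
    (hv : (A * K * Aᵀ) *ᵥ v = r • v) : A *ᵥ (B *ᵥ v) = v := by
  have hrange : v = A *ᵥ (r⁻¹ • (K * Aᵀ) *ᵥ v) := by
    rw [mulVec_smul, mulVec_mulVec, ← Matrix.mul_assoc, hv, smul_smul, inv_mul_cancel₀ hr,
      one_smul]
  rw [mulVec_mulVec, hrange, h.mul_mulVec_mulVec]

theorem dotProduct_transpose_mul_mulVec {R : Type*} [CommSemiring R] (A : Matrix m n R)
    (c d : n → R) :
    c ⬝ᵥ (Aᵀ * A) *ᵥ d = (A *ᵥ c) ⬝ᵥ (A *ᵥ d) := by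
  rw [← mulVec_mulVec, dotProduct_mulVec, vecMul_transpose]

theorem mul_diagonal_mul_transpose_mulVec_col {R : Type*} [CommSemiring R] [DecidableEq n]
    {V : Matrix n n R} (hV : Vᵀ * V = 1) (κ : n → R) (i : n) :
    (V * diagonal κ * Vᵀ) *ᵥ (fun b => V b i) = κ i • fun b => V b i := by
  have hcol : (fun b => V b i) = V *ᵥ Pi.single i 1 := (mulVec_single_one V i).symm
  rw [hcol, mulVec_mulVec, Matrix.mul_assoc, hV, Matrix.mul_one, ← mulVec_mulVec,
    diagonal_mulVec_single, mul_one, ← mulVec_smul, ← Pi.single_smul, smul_eq_mul, mul_one]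

end LinearAlgebra

section Gram

variable {ι 𝒳 : Type*} [Fintype ι] [MeasurableSpace 𝒳] {μ : Measure 𝒳}
  {g : ι → 𝒳 → ℝ} {M : Matrix ι ι ℝ}

theorem memLp_dotProduct (hg : ∀ a, MemLp (g a) 2 μ) (c : ι → ℝ) :
    MemLp (fun x => c ⬝ᵥ fun a => g a x) 2 μ :=
  memLp_finsetSum _ fun a _ => (hg a).const_mul (c a)

theorem integral_dotProduct_mul_dotProduct (hg : ∀ a, MemLp (g a) 2 μ)
    (hM : ∀ a b, M a b = ∫ x, g a x * g b x ∂μ) (c d : ι → ℝ) :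
    ∫ x, (c ⬝ᵥ fun a => g a x) * (d ⬝ᵥ fun b => g b x) ∂μ = c ⬝ᵥ M *ᵥ d := by
  have hexpand : ∀ x, (c ⬝ᵥ fun a => g a x) * (d ⬝ᵥ fun b => g b x)
      = ∑ a, ∑ b, c a * d b * (g a x * g b x) := fun x => by
    simp only [dotProduct, Finset.sum_mul_sum]
    exact Finset.sum_congr rfl fun a _ => Finset.sum_congr rfl fun b _ => by ring
  have hint : ∀ a b, Integrable (fun x => c a * d b * (g a x * g b x)) μ :=
    fun a b => ((hg a).integrable_mul (hg b)).const_mul _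
  simp_rw [hexpand]
  rw [integral_finsetSum _ fun a _ => integrable_finsetSum _ fun b _ => hint a b]
  simp only [dotProduct, mulVec, Finset.mul_sum, hM]
  refine Finset.sum_congr rfl fun a _ => ?_
  rw [integral_finsetSum _ fun b _ => hint a b]
  exact Finset.sum_congr rfl fun b _ => by rw [integral_const_mul]; ring

theorem ae_dotProduct_eq_of_mulVec_eq {m : Type*} [Fintype m] {A : Matrix m ι ℝ}
    (hg : ∀ a, MemLp (g a) 2 μ) (hA : ∀ a b, (Aᵀ * A) a b = ∫ x, g a x * g b x ∂μ)
    {c d : ι → ℝ} (h : A *ᵥ c = A *ᵥ d) :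
    ∀ᵐ x ∂μ, (c ⬝ᵥ fun a => g a x) = d ⬝ᵥ fun a => g a x := by
  set e := c - d
  have hnorm : ∫ x, (e ⬝ᵥ fun a => g a x) * (e ⬝ᵥ fun a => g a x) ∂μ = 0 := by
    rw [integral_dotProduct_mul_dotProduct hg hA, dotProduct_transpose_mul_mulVec, mulVec_sub,
      h, sub_self, zero_dotProduct]
  have hint : Integrable (fun x => (e ⬝ᵥ fun a => g a x) * (e ⬝ᵥ fun a => g a x)) μ :=
    (memLp_dotProduct hg e).integrable_mul (memLp_dotProduct hg e)
  filter_upwards [(integral_eq_zero_iff_of_nonneg (fun x => mul_self_nonneg _) hint).mp hnorm]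
    with x hx
  rw [← sub_eq_zero, ← sub_dotProduct]
  exact mul_self_eq_zero.mp hx

end Gram

theorem stmt9_general
    {𝒳 : Type*} [MeasurableSpace 𝒳] (μ : Measure 𝒳)
    (k : 𝒳 → 𝒳 → ℝ) (hpd : IsPosDefKernel k)
    (ℓ : ℕ) (Z : Fin ℓ → 𝒳)
    (hL2 : ∀ a, MemLp (fun x => k (Z a) x) 2 μ)
    (Kp : Matrix (Fin ℓ) (Fin ℓ) ℝ)
    (kZ : 𝒳 → 𝒳 → ℝ)
    (hkZ : ∀ x y, kZ x y = ∑ a, ∑ b, k x (Z a) * Kp a b * k (Z b) y)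
    (hmu : Matrix (Fin ℓ) (Fin ℓ) ℝ)
    (hhmu : ∀ a b, hmu a b = ∫ x, k (Z a) x * k x (Z b) ∂μ)
    (Hm : Matrix (Fin ℓ) (Fin ℓ) ℝ) (hHm : Hmᵀ * Hm = hmu)
    (Hp : Matrix (Fin ℓ) (Fin ℓ) ℝ) (hHp : IsMoorePenrose Hm Hp)
    (V : Matrix (Fin ℓ) (Fin ℓ) ℝ) (hV : Vᵀ * V = 1)
    (κ : Fin ℓ → ℝ)
    (hVdecomp : Hm * Kp * Hmᵀ = V * Matrix.diagonal κ * Vᵀ)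
    (f : Fin ℓ → 𝒳 → ℝ)
    (hf : ∀ i x, f i x = ∑ a, Hp.mulVec (fun b => V b i) a * k (Z a) x) :
    (∀ i : Fin ℓ, 0 < κ i → MemLp (f i) 2 μ) ∧
    (∀ i j : Fin ℓ, 0 < κ i → 0 < κ j →
      (∫ x, f i x * f j x ∂μ) = if i = j then 1 else 0) ∧
    (∀ i : Fin ℓ, 0 < κ i →
      ∀ᵐ x ∂μ, (∫ y, kZ x y * f i y ∂μ) = κ i * f i x) := by
  obtain ⟨hsymm, -⟩ := hpd
  set φ : 𝒳 → Fin ℓ → ℝ := fun x a => k (Z a) x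
  set v : Fin ℓ → Fin ℓ → ℝ := fun i b => V b i
  have hf' : ∀ i, f i = fun x => (Hp *ᵥ v i) ⬝ᵥ φ x := fun i => funext (hf i)
  have hgram : ∀ a b, (Hmᵀ * Hm) a b = ∫ x, k (Z a) x * k (Z b) x ∂μ := fun a b => by
    simp_rw [hHm, hhmu, hsymm _ (Z b)]
  have hkZ' : ∀ x y, kZ x y = (φ x ᵥ* Kp) ⬝ᵥ φ y := fun x y => by
    simp only [hkZ, vecMul, dotProduct, Finset.sum_mul, hsymm x, φ]
    exact Finset.sum_comm
  have heigen : ∀ i, (Hm * Kp * Hmᵀ) *ᵥ v i = κ i • v i := fun i => by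
    rw [hVdecomp]; exact mul_diagonal_mul_transpose_mulVec_col hV κ i
  have hfix : ∀ i, 0 < κ i → Hm *ᵥ (Hp *ᵥ v i) = v i := fun i hi =>
    hHp.mulVec_mulVec_eq_of_mulVec_eq_smul hi.ne' (heigen i)
  refine ⟨fun i _ => hf' i ▸ memLp_dotProduct hL2 _, fun i j hi hj => ?_, fun i hi => ?_⟩
  · rw [hf', hf', integral_dotProduct_mul_dotProduct hL2 hgram, dotProduct_transpose_mul_mulVec,
      hfix i hi, hfix j hj, show v i ⬝ᵥ v j = (Vᵀ * V) i j from rfl, hV, one_apply]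
  · set w := Hp *ᵥ v i
    have hintegral : ∀ x, ∫ y, kZ x y * f i y ∂μ = ((Kp * (Hmᵀ * Hm)) *ᵥ w) ⬝ᵥ φ x := fun x => by
      simp_rw [hkZ', hf']
      rw [integral_dotProduct_mul_dotProduct hL2 hgram, ← dotProduct_mulVec, mulVec_mulVec,
        dotProduct_comm]
    have hsame : Hm *ᵥ ((Kp * (Hmᵀ * Hm)) *ᵥ w) = Hm *ᵥ (κ i • w) := by
      rw [mulVec_smul, hfix i hi, mulVec_mulVec, mulVec_mulVec,
        hHp.mul_mul_transpose_mul_self_mul, heigen]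
    filter_upwards [ae_dotProduct_eq_of_mulVec_eq hL2 hgram hsame] with x hx
    rw [hintegral, hx, hf', smul_dotProduct, smul_eq_mul]

/-- the functions `f_i(x) = (H⁺v_i)ᵀ k(Z,x)` with `κ_i > 0` belong
to `L²(μ)`, are orthonormal there, and are eigenfunctions of the integral
operator of `k^Z` with eigenvalues `κ_i`. -/
theorem stmt9
    {𝒳 : Type*} [MeasurableSpace 𝒳] (μ : Measure 𝒳) [IsProbabilityMeasure μ]
    (k : 𝒳 → 𝒳 → ℝ) (hpd : IsPosDefKernel k)
    (ℓ : ℕ) (Z : Fin ℓ → 𝒳)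
    (hL2 : ∀ a, MemLp (fun x => k (Z a) x) 2 μ)
    (G : Matrix (Fin ℓ) (Fin ℓ) ℝ) (hG : ∀ a b, G a b = k (Z a) (Z b))
    (Kp : Matrix (Fin ℓ) (Fin ℓ) ℝ) (hKp : IsMoorePenrose G Kp)
    (kZ : 𝒳 → 𝒳 → ℝ)
    (hkZ : ∀ x y, kZ x y = ∑ a, ∑ b, k x (Z a) * Kp a b * k (Z b) y)
    (hmu : Matrix (Fin ℓ) (Fin ℓ) ℝ)
    (hhmu : ∀ a b, hmu a b = ∫ x, k (Z a) x * k x (Z b) ∂μ)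
    (Hm : Matrix (Fin ℓ) (Fin ℓ) ℝ) (hHm : Hmᵀ * Hm = hmu)
    (Hp : Matrix (Fin ℓ) (Fin ℓ) ℝ) (hHp : IsMoorePenrose Hm Hp)
    (V : Matrix (Fin ℓ) (Fin ℓ) ℝ) (hV : Vᵀ * V = 1)
    (κ : Fin ℓ → ℝ)
    (hκmono : ∀ i j : Fin ℓ, i ≤ j → κ j ≤ κ i) (hκ0 : ∀ i, 0 ≤ κ i)
    (hVdecomp : Hm * Kp * Hmᵀ = V * Matrix.diagonal κ * Vᵀ)
    (f : Fin ℓ → 𝒳 → ℝ)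
    (hf : ∀ i x, f i x = ∑ a, Hp.mulVec (fun b => V b i) a * k (Z a) x) :
    (∀ i : Fin ℓ, 0 < κ i → MemLp (f i) 2 μ) ∧
    (∀ i j : Fin ℓ, 0 < κ i → 0 < κ j →
      (∫ x, f i x * f j x ∂μ) = if i = j then 1 else 0) ∧
    (∀ i : Fin ℓ, 0 < κ i →
      ∀ᵐ x ∂μ, (∫ y, kZ x y * f i y ∂μ) = κ i * f i x) :=
  stmt9_general μ k hpd ℓ Z hL2 Kp kZ hkZ hmu hhmu Hm hHm Hp hHp V hV κ hVdecomp f hf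
end

section
/- Define k_μ^Z(x,y) := ∑_{i=1}^ℓ κ_i f_i(x) f_i(y). There exists a measurable set A ⊆ 𝒳 with μ(A) = 1 such that k^Z(x,y) = k_μ^Z(x,y) for all x, y ∈ A. Moreover, if ker h_μ(Z,Z) ⊆ ker k(Z,Z), then k^Z(x,y) = k_μ^Z(x,y) for all x, y ∈ 𝒳. -/
/-! With `u x := k(Z, x)` and `K := k(Z,Z)`, both kernels are quadratic forms in `u`:
`k^Z(x,y) = u(x)ᵀ K⁺ u(y)` and, since `H⁺ V diag(κ) Vᵀ H⁺ᵀ = P K⁺ P` for the orthogonal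
projection `P = H⁺H`, `k_μ^Z(x,y) = u(x)ᵀ P K⁺ P u(y)`. For `v ∈ ker h_μ = ker H = range (1 - P)`
we have `∫ (vᵀu)² dμ = vᵀ h_μ v = 0`, so `P u(x) = u(x)` for `μ`-a.e. `x`, and the two forms agree
there. If moreover `ker h_μ ⊆ ker K`, then `K (1 - P) = 0`, which forces
`K⁺ (1 - P) = (1 - P) K⁺ = 0`, i.e. `P K⁺ P = K⁺`. -/

open scoped BigOperators
open Matrix MeasureTheory

namespace IsMoorePenrose

variable {m n p : Type*} [Fintype m] [Fintype n] {A : Matrix m n ℝ} {B : Matrix n m ℝ}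

theorem mul_one_sub_mul_self [DecidableEq n] (h : IsMoorePenrose A B) :
    A * (1 - B * A) = 0 := by
  rw [Matrix.mul_sub, Matrix.mul_one, ← Matrix.mul_assoc, h.1, sub_self]

theorem mul_eq_zero_of_transpose_mul_eq_zero (h : IsMoorePenrose A B) {M : Matrix m p ℝ}
    (hM : Aᵀ * M = 0) : B * M = 0 := by
  have hB : B = B * Bᵀ * Aᵀ := by
    conv_lhs => rw [← h.2.1, Matrix.mul_assoc, ← h.2.2.1, transpose_mul, ← Matrix.mul_assoc]
  rw [hB, Matrix.mul_assoc, hM, Matrix.mul_zero]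

theorem mul_eq_zero_of_mul_transpose_eq_zero (h : IsMoorePenrose A B) {M : Matrix p n ℝ}
    (hM : M * Aᵀ = 0) : M * B = 0 := by
  have hB : B = Aᵀ * Bᵀ * B := by
    conv_lhs => rw [← h.2.1, ← h.2.2.2, transpose_mul]
  rw [hB, ← Matrix.mul_assoc, ← Matrix.mul_assoc, hM, Matrix.zero_mul, Matrix.zero_mul]

theorem mul_mul_eq_self_of_mul_one_sub_eq_zero [DecidableEq n] {A B P : Matrix n n ℝ}
    (h : IsMoorePenrose A B) (hA : Aᵀ = A) (hP : Pᵀ = P) (hAP : A * (1 - P) = 0) :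
    P * B * P = B := by
  have hBP : B * (1 - P) = 0 := h.mul_eq_zero_of_transpose_mul_eq_zero (by rwa [hA])
  have hPB : (1 - P) * B = 0 := h.mul_eq_zero_of_mul_transpose_eq_zero <| by
    rw [← transpose_transpose (1 - P), ← transpose_mul, transpose_sub, transpose_one, hP, hAP,
      transpose_zero]
  rw [mul_sub, mul_one, sub_eq_zero] at hBP
  rw [sub_mul, one_mul, sub_eq_zero] at hPB
  rw [← hPB, ← hBP]

end IsMoorePenrose

namespace Matrix

variable {m n p q : Type*} [Fintype n]

theorem mul_eq_zero_of_forall_mulVec_eq_zero_imp {A : Matrix p n ℝ} {C : Matrix m n ℝ}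
    (hker : ∀ v, A *ᵥ v = 0 → C *ᵥ v = 0) {M : Matrix n q ℝ} (hAM : A * M = 0) :
    C * M = 0 := by
  ext i j
  have hcol : A *ᵥ (fun b => M b j) = 0 := by
    funext i'
    simpa [mul_apply, mulVec, dotProduct] using congrFun (congrFun hAM i') j
  simpa [mulVec, dotProduct, mul_apply] using congrFun (hker _ hcol) i

theorem sum_mul_mulVec_transpose_mul_mulVec_transpose [Fintype m] [DecidableEq m]
    (W : Matrix n m ℝ) (κ : m → ℝ) (a b : n → ℝ) :
    ∑ i, κ i * (Wᵀ *ᵥ a) i * (Wᵀ *ᵥ b) i = a ⬝ᵥ (W * diagonal κ * Wᵀ) *ᵥ b := by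
  rw [← mulVec_mulVec, ← mulVec_mulVec, dotProduct_mulVec, ← mulVec_transpose]
  simp only [dotProduct, mulVec_diagonal]
  exact Finset.sum_congr rfl fun i _ => by ring

theorem dotProduct_mul_mul_mulVec_of_mulVec_eq {P K : Matrix n n ℝ} (hP : Pᵀ = P)
    {a b : n → ℝ} (ha : P *ᵥ a = a) (hb : P *ᵥ b = b) :
    a ⬝ᵥ (P * K * P) *ᵥ b = a ⬝ᵥ K *ᵥ b := by
  rw [← mulVec_mulVec, hb, ← mulVec_mulVec, dotProduct_mulVec, ← mulVec_transpose, hP, ha]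

end Matrix

section IntegralGram

variable {𝒳 ι : Type*} [MeasurableSpace 𝒳] {μ : Measure 𝒳} [Fintype ι]

noncomputable def integralGram (μ : Measure 𝒳) (u : 𝒳 → ι → ℝ) : Matrix ι ι ℝ :=
  of fun a b => ∫ x, u x a * u x b ∂μ

theorem integral_dotProduct_sq {u : 𝒳 → ι → ℝ} (hu : ∀ a, MemLp (fun x => u x a) 2 μ)
    (v : ι → ℝ) : ∫ x, (v ⬝ᵥ u x) ^ 2 ∂μ = v ⬝ᵥ integralGram μ u *ᵥ v := by
  have hint : ∀ a b, Integrable (fun x => v a * v b * (u x a * u x b)) μ :=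
    fun a b => ((hu a).integrable_mul (hu b)).const_mul _
  calc ∫ x, (v ⬝ᵥ u x) ^ 2 ∂μ = ∫ x, ∑ a, ∑ b, v a * v b * (u x a * u x b) ∂μ := by
        congr 1; ext x
        rw [sq, dotProduct, Finset.sum_mul_sum]
        exact Finset.sum_congr rfl fun a _ => Finset.sum_congr rfl fun b _ => by ring
    _ = ∑ a, ∑ b, v a * v b * ∫ x, u x a * u x b ∂μ := by
        rw [integral_finsetSum _ fun a _ => integrable_finsetSum _ fun b _ => hint a b]
        refine Finset.sum_congr rfl fun a _ => ?_
        rw [integral_finsetSum _ fun b _ => hint a b]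
        exact Finset.sum_congr rfl fun b _ => integral_const_mul _ _
    _ = v ⬝ᵥ integralGram μ u *ᵥ v := by
        simp only [dotProduct, mulVec, integralGram, of_apply, Finset.mul_sum]
        exact Finset.sum_congr rfl fun a _ => Finset.sum_congr rfl fun b _ => by ring

theorem ae_dotProduct_eq_zero_of_integralGram_mulVec_eq_zero {u : 𝒳 → ι → ℝ}
    (hu : ∀ a, MemLp (fun x => u x a) 2 μ) {v : ι → ℝ} (hv : integralGram μ u *ᵥ v = 0) :
    ∀ᵐ x ∂μ, v ⬝ᵥ u x = 0 := by
  have hmem : MemLp (fun x => v ⬝ᵥ u x) 2 μ :=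
    memLp_finsetSum _ fun a _ => (hu a).const_mul (v a)
  have hsq : (fun x => (v ⬝ᵥ u x) ^ 2) =ᵐ[μ] 0 := by
    rw [← integral_eq_zero_iff_of_nonneg (fun x => sq_nonneg _) hmem.integrable_sq,
      integral_dotProduct_sq hu, hv, dotProduct_zero]
  filter_upwards [hsq] with x hx using pow_eq_zero_iff two_ne_zero |>.mp hx

theorem ae_mulVec_eq_zero_of_integralGram_mul_transpose_eq_zero {κ : Type*} [Countable κ]
    {u : 𝒳 → ι → ℝ} (hu : ∀ a, MemLp (fun x => u x a) 2 μ) {M : Matrix κ ι ℝ}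
    (hM : integralGram μ u * Mᵀ = 0) : ∀ᵐ x ∂μ, M *ᵥ u x = 0 := by
  have hrow : ∀ c, ∀ᵐ x ∂μ, M c ⬝ᵥ u x = 0 := fun c =>
    ae_dotProduct_eq_zero_of_integralGram_mulVec_eq_zero hu <| by
      funext a
      simpa [mul_apply, mulVec, dotProduct] using congrFun (congrFun hM a) c
  filter_upwards [ae_all_iff.2 hrow] with x hx using funext hx

theorem exists_measurableSet_measure_eq_one_of_ae [IsProbabilityMeasure μ] {q : 𝒳 → Prop}
    (h : ∀ᵐ x ∂μ, q x) : ∃ A, MeasurableSet A ∧ μ A = 1 ∧ ∀ x ∈ A, q x := by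
  obtain ⟨t, hqt, ht, hμt⟩ := exists_measurable_superset_of_null (ae_iff.1 h)
  exact ⟨tᶜ, ht.compl, (prob_compl_eq_one_iff ht).2 hμt,
    fun x hx => by_contra fun hqx => hx (hqt hqx)⟩

end IntegralGram

theorem stmt10_general
    {𝒳 : Type*} [MeasurableSpace 𝒳] (μ : Measure 𝒳) [IsProbabilityMeasure μ]
    (k : 𝒳 → 𝒳 → ℝ) (hpd : IsPosDefKernel k)
    (ℓ : ℕ) (Z : Fin ℓ → 𝒳)
    (hL2 : ∀ a, MemLp (fun x => k (Z a) x) 2 μ)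
    (G : Matrix (Fin ℓ) (Fin ℓ) ℝ) (hG : ∀ a b, G a b = k (Z a) (Z b))
    (Kp : Matrix (Fin ℓ) (Fin ℓ) ℝ) (hKp : IsMoorePenrose G Kp)
    (kZ : 𝒳 → 𝒳 → ℝ)
    (hkZ : ∀ x y, kZ x y = ∑ a, ∑ b, k x (Z a) * Kp a b * k (Z b) y)
    (hmu : Matrix (Fin ℓ) (Fin ℓ) ℝ)
    (hhmu : ∀ a b, hmu a b = ∫ x, k (Z a) x * k x (Z b) ∂μ)
    (Hm : Matrix (Fin ℓ) (Fin ℓ) ℝ) (hHm : Hmᵀ * Hm = hmu)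
    (Hp : Matrix (Fin ℓ) (Fin ℓ) ℝ) (hHp : IsMoorePenrose Hm Hp)
    (V : Matrix (Fin ℓ) (Fin ℓ) ℝ)
    (κ : Fin ℓ → ℝ)
    (hVdecomp : Hm * Kp * Hmᵀ = V * Matrix.diagonal κ * Vᵀ)
    (f : Fin ℓ → 𝒳 → ℝ)
    (hf : ∀ i x, f i x = ∑ a, Hp.mulVec (fun b => V b i) a * k (Z a) x)
    (kmuZ : 𝒳 → 𝒳 → ℝ)
    (hkmuZ : ∀ x y, kmuZ x y = ∑ i, κ i * f i x * f i y) :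
    (∃ A : Set 𝒳, MeasurableSet A ∧ μ A = 1 ∧
      ∀ x ∈ A, ∀ y ∈ A, kZ x y = kmuZ x y) ∧
    ((∀ v : Fin ℓ → ℝ, hmu.mulVec v = 0 → G.mulVec v = 0) →
      ∀ x y, kZ x y = kmuZ x y) := by
  obtain ⟨hsym, -⟩ := hpd
  set u : 𝒳 → Fin ℓ → ℝ := fun x a => k (Z a) x
  set P := Hp * Hm
  have hPsym : Pᵀ = P := hHp.2.2.2
  have hkZ_eq : ∀ x y, kZ x y = u x ⬝ᵥ Kp *ᵥ u y := fun x y => by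
    simp only [hkZ, dotProduct, mulVec, Finset.mul_sum, u, hsym x]
    exact Finset.sum_congr rfl fun a _ => Finset.sum_congr rfl fun b _ => by ring
  have hkmuZ_eq : ∀ x y, kmuZ x y = u x ⬝ᵥ (P * Kp * P) *ᵥ u y := fun x y => by
    have hfeat : ∀ i x, f i x = ((Hp * V)ᵀ *ᵥ u x) i := fun i x => by
      simp [hf, mulVec, dotProduct, mul_apply, u]
    have hPKpP : Hp * V * diagonal κ * (Hp * V)ᵀ = P * Kp * P := by
      calc Hp * V * diagonal κ * (Hp * V)ᵀ = Hp * (V * diagonal κ * Vᵀ) * Hpᵀ := by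
            simp only [transpose_mul, mul_assoc]
        _ = P * Kp * Pᵀ := by simp only [← hVdecomp, P, transpose_mul, mul_assoc]
        _ = P * Kp * P := by rw [hPsym]
    simp only [hkmuZ, hfeat, sum_mul_mulVec_transpose_mul_mulVec_transpose, hPKpP]
  have hmuM : hmu * (1 - P) = 0 := by
    rw [← hHm, mul_assoc, hHp.mul_one_sub_mul_self, mul_zero]
  refine ⟨?_, fun hker x y => ?_⟩
  · have hgram : integralGram μ u = hmu := by
      ext a b; simp [integralGram, hhmu, u, hsym _ (Z b)]
    have hfix : ∀ᵐ x ∂μ, P *ᵥ u x = u x := by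
      filter_upwards [ae_mulVec_eq_zero_of_integralGram_mul_transpose_eq_zero hL2
        (M := 1 - P) (by rw [hgram, transpose_sub, transpose_one, hPsym, hmuM])] with x hx
      rwa [sub_mulVec, one_mulVec, sub_eq_zero, eq_comm] at hx
    obtain ⟨A, hA, hμA, hAfix⟩ := exists_measurableSet_measure_eq_one_of_ae hfix
    refine ⟨A, hA, hμA, fun x hx y hy => ?_⟩
    rw [hkZ_eq, hkmuZ_eq, dotProduct_mul_mul_mulVec_of_mulVec_eq hPsym (hAfix x hx) (hAfix y hy)]
  · have hGsym : Gᵀ = G := by ext a b; simp [hG, hsym]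
    have hGM : G * (1 - P) = 0 := mul_eq_zero_of_forall_mulVec_eq_zero_imp hker hmuM
    rw [hkZ_eq, hkmuZ_eq, hKp.mul_mul_eq_self_of_mul_one_sub_eq_zero hGsym hPsym hGM]

/-- with `k_μ^Z(x,y) = ∑ κ_i f_i(x) f_i(y)`, there is a
measurable set `A` of full measure with `k^Z = k_μ^Z` on `A × A`; and if
`ker h_μ(Z,Z) ⊆ ker k(Z,Z)` the equality holds everywhere. -/
theorem stmt10
    {𝒳 : Type*} [MeasurableSpace 𝒳] (μ : Measure 𝒳) [IsProbabilityMeasure μ]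
    (k : 𝒳 → 𝒳 → ℝ) (hpd : IsPosDefKernel k)
    (ℓ : ℕ) (Z : Fin ℓ → 𝒳)
    (hL2 : ∀ a, MemLp (fun x => k (Z a) x) 2 μ)
    (G : Matrix (Fin ℓ) (Fin ℓ) ℝ) (hG : ∀ a b, G a b = k (Z a) (Z b))
    (Kp : Matrix (Fin ℓ) (Fin ℓ) ℝ) (hKp : IsMoorePenrose G Kp)
    (kZ : 𝒳 → 𝒳 → ℝ)
    (hkZ : ∀ x y, kZ x y = ∑ a, ∑ b, k x (Z a) * Kp a b * k (Z b) y)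
    (hmu : Matrix (Fin ℓ) (Fin ℓ) ℝ)
    (hhmu : ∀ a b, hmu a b = ∫ x, k (Z a) x * k x (Z b) ∂μ)
    (Hm : Matrix (Fin ℓ) (Fin ℓ) ℝ) (hHm : Hmᵀ * Hm = hmu)
    (Hp : Matrix (Fin ℓ) (Fin ℓ) ℝ) (hHp : IsMoorePenrose Hm Hp)
    (V : Matrix (Fin ℓ) (Fin ℓ) ℝ) (hV : Vᵀ * V = 1)
    (κ : Fin ℓ → ℝ)
    (hκmono : ∀ i j : Fin ℓ, i ≤ j → κ j ≤ κ i) (hκ0 : ∀ i, 0 ≤ κ i)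
    (hVdecomp : Hm * Kp * Hmᵀ = V * Matrix.diagonal κ * Vᵀ)
    (f : Fin ℓ → 𝒳 → ℝ)
    (hf : ∀ i x, f i x = ∑ a, Hp.mulVec (fun b => V b i) a * k (Z a) x)
    (kmuZ : 𝒳 → 𝒳 → ℝ)
    (hkmuZ : ∀ x y, kmuZ x y = ∑ i, κ i * f i x * f i y) :
    (∃ A : Set 𝒳, MeasurableSet A ∧ μ A = 1 ∧
      ∀ x ∈ A, ∀ y ∈ A, kZ x y = kmuZ x y) ∧
    ((∀ v : Fin ℓ → ℝ, hmu.mulVec v = 0 → G.mulVec v = 0) →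
      ∀ x y, kZ x y = kmuZ x y) :=
  stmt10_general μ k hpd ℓ Z hL2 G hG Kp hKp kZ hkZ hmu hhmu Hm hHm Hp hHp V κ hVdecomp f hf kmuZ
    hkmuZ
end

section
/- For any Z ∈ 𝒳^ℓ and any X = (x_1,…,x_M) ∈ 𝒳^M: (a) k_X^Z(x_a, x_b) = k^Z(x_a, x_b) for all a, b ∈ {1,…,M}; (b) if moreover ker k(X,Z) ⊆ ker k(Z,Z), then k_X^Z(x,y) = k^Z(x,y) for all x, y ∈ 𝒳. In particular, if every row of k(Z,Z) appears among the rows of k(X,Z) in the appropriate sense (e.g. Z ⊆ X), equality holds everywhere. -/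
open scoped BigOperators
open Matrix

/-- If `A * Aᵀ = 0` over `ℝ`, then `A = 0`. -/
lemma mul_transpose_self_eq_zero' {m n : Type*} [Fintype m] [Fintype n]
    (A : Matrix m n ℝ) (h : A * Aᵀ = 0) : A = 0 := by
  ext i j
  have hii := congrFun (congrFun h i) i
  simp only [Matrix.mul_apply, Matrix.transpose_apply, Matrix.zero_apply] at hii
  have h2 := (Finset.sum_eq_zero_iff_of_nonneg
    (fun j _ => mul_self_nonneg (A i j))).mp hii j (Finset.mem_univ j)
  simpa [mul_self_eq_zero] using h2

/-- (a) `k_X^Z = k^Z` on the points of `X`;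
(b) if `ker k(X,Z) ⊆ ker k(Z,Z)`, then `k_X^Z = k^Z` everywhere. -/
theorem stmt13
    {𝒳 : Type*} (k : 𝒳 → 𝒳 → ℝ) (hpd : IsPosDefKernel k)
    (ℓ M : ℕ) (Z : Fin ℓ → 𝒳) (X : Fin M → 𝒳)
    (G : Matrix (Fin ℓ) (Fin ℓ) ℝ) (hG : ∀ a b, G a b = k (Z a) (Z b))
    (Kp : Matrix (Fin ℓ) (Fin ℓ) ℝ) (hKp : IsMoorePenrose G Kp)
    (kZ : 𝒳 → 𝒳 → ℝ)
    (hkZ : ∀ x y, kZ x y = ∑ a, ∑ b, k x (Z a) * Kp a b * k (Z b) y)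
    (kZX : Matrix (Fin ℓ) (Fin M) ℝ) (hkZX : ∀ a j, kZX a j = k (Z a) (X j))
    (hX : Matrix (Fin ℓ) (Fin ℓ) ℝ) (hhX : hX = (M : ℝ)⁻¹ • (kZX * kZXᵀ))
    (Hm : Matrix (Fin ℓ) (Fin ℓ) ℝ) (hHm : Hmᵀ * Hm = hX)
    (Hp : Matrix (Fin ℓ) (Fin ℓ) ℝ) (hHp : IsMoorePenrose Hm Hp)
    (V : Matrix (Fin ℓ) (Fin ℓ) ℝ) (hV : Vᵀ * V = 1)
    (κ : Fin ℓ → ℝ)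
    (hκmono : ∀ i j : Fin ℓ, i ≤ j → κ j ≤ κ i) (hκ0 : ∀ i, 0 ≤ κ i)
    (hVdecomp : Hm * Kp * Hmᵀ = V * Matrix.diagonal κ * Vᵀ)
    (f : Fin ℓ → 𝒳 → ℝ)
    (hf : ∀ i x, f i x = ∑ a, Hp.mulVec (fun b => V b i) a * k (Z a) x)
    (kXZ : 𝒳 → 𝒳 → ℝ)
    (hkXZ : ∀ x y, kXZ x y = ∑ i, κ i * f i x * f i y) :
    (∀ a b : Fin M, kXZ (X a) (X b) = kZ (X a) (X b)) ∧
    ((∀ v : Fin ℓ → ℝ, kZXᵀ.mulVec v = 0 → G.mulVec v = 0) →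
      ∀ x y, kXZ x y = kZ x y) := by
  obtain ⟨hsym, -⟩ := hpd
  obtain ⟨hG1, hG2, hG3, hG4⟩ := hKp
  set P : Matrix (Fin ℓ) (Fin ℓ) ℝ := Hp * Hm with hP
  have hPsym : Pᵀ = P := hHp.2.2.2
  have hP2 : P = Hmᵀ * Hpᵀ := by
    rw [← hPsym, hP, Matrix.transpose_mul]
  -- P * Hmᵀ = Hmᵀ
  have hPHm : P * Hmᵀ = Hmᵀ := by
    rw [hP2, Matrix.mul_assoc, ← Matrix.transpose_mul, ← Matrix.transpose_mul, hHp.1]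
  -- P fixes the columns of kZX
  have hPk : P * kZX = kZX := by
    rcases Nat.eq_zero_or_pos M with hM | hM
    · subst hM; ext i j; exact j.elim0
    · have hS : P * (kZX * kZXᵀ) = kZX * kZXᵀ := by
        have h1 : P * hX = hX := by rw [← hHm, ← Matrix.mul_assoc, hPHm]
        rw [hhX, Matrix.mul_smul] at h1
        have hMne : ((M : ℝ)⁻¹) ≠ 0 := by
          have : (M : ℝ) ≠ 0 := Nat.cast_ne_zero.mpr hM.ne'
          exact inv_ne_zero this
        exact smul_right_injective _ hMne h1
      have hSP : (kZX * kZXᵀ) * P = kZX * kZXᵀ := by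
        have := congrArg Matrix.transpose hS
        rw [Matrix.transpose_mul, hPsym, Matrix.transpose_mul,
          Matrix.transpose_transpose] at this
        exact this
      have h2 : kZX * (kZXᵀ * P) = kZX * kZXᵀ := by rw [← Matrix.mul_assoc]; exact hSP
      have h3 : P * kZX * kZXᵀ = kZX * kZXᵀ := by rw [Matrix.mul_assoc]; exact hS
      have h4 : P * kZX * (kZXᵀ * P) = kZX * kZXᵀ := by
        rw [← Matrix.mul_assoc, h3]; exact hSP
      have hA : (kZX - P * kZX) * (kZX - P * kZX)ᵀ = 0 := by
        rw [Matrix.transpose_sub, Matrix.transpose_mul, hPsym, Matrix.sub_mul,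
          Matrix.mul_sub, Matrix.mul_sub, h2, h3, h4]
        simp
      have h5 := mul_transpose_self_eq_zero' _ hA
      have h6 := sub_eq_zero.mp h5
      exact h6.symm
  -- kZ as a bilinear form
  have hkZ' : ∀ x y, kZ x y =
      dotProduct (fun a => k (Z a) x) (Kp.mulVec (fun a => k (Z a) y)) := by
    intro x y
    rw [hkZ x y]
    simp only [dotProduct, Matrix.mulVec, Finset.mul_sum]
    refine Finset.sum_congr rfl fun a _ => Finset.sum_congr rfl fun b _ => ?_
    rw [hsym x (Z a)]; ring
  -- kXZ as a bilinear form with matrix P * Kp * P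
  have hQ : P * Kp * P = (Hp * V) * Matrix.diagonal κ * (Hp * V)ᵀ := by
    nth_rewrite 2 [hP2]
    rw [hP]
    have : Hp * Hm * Kp * (Hmᵀ * Hpᵀ) = Hp * (Hm * Kp * Hmᵀ) * Hpᵀ := by
      simp only [Matrix.mul_assoc]
    rw [this, hVdecomp, Matrix.transpose_mul]
    simp only [Matrix.mul_assoc]
  have hfQ : ∀ i x, f i x = ((Hp * V)ᵀ.mulVec (fun a => k (Z a) x)) i := by
    intro i x
    rw [hf]
    simp only [Matrix.mulVec, dotProduct, Matrix.transpose_apply,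
      Matrix.mul_apply]
  have hkXZ' : ∀ x y, kXZ x y =
      dotProduct (fun a => k (Z a) x) ((P * Kp * P).mulVec (fun a => k (Z a) y)) := by
    intro x y
    rw [hkXZ x y, hQ, ← Matrix.mulVec_mulVec, ← Matrix.mulVec_mulVec,
      Matrix.dotProduct_mulVec, ← Matrix.mulVec_transpose]
    simp only [dotProduct]
    refine Finset.sum_congr rfl fun i _ => ?_
    rw [hfQ i x, hfQ i y, Matrix.mulVec_diagonal]
    ring
  -- P fixes the vectors k(Z, X j)
  have hPw : ∀ j, P.mulVec (fun a => k (Z a) (X j)) = fun a => k (Z a) (X j) := by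
    intro j
    funext a
    have h1 := congrFun (congrFun hPk a) j
    simp only [Matrix.mul_apply] at h1
    simp only [Matrix.mulVec, dotProduct]
    simp only [hkZX] at h1
    exact h1
  constructor
  · intro a b
    rw [hkXZ', hkZ', ← Matrix.mulVec_mulVec, ← Matrix.mulVec_mulVec, hPw b,
      Matrix.dotProduct_mulVec, ← Matrix.mulVec_transpose, hPsym, hPw a]
  · intro h x y
    -- kZXᵀ * P = kZXᵀ
    have h1 : kZXᵀ * P = kZXᵀ := by
      have := congrArg Matrix.transpose hPk
      rw [Matrix.transpose_mul, hPsym] at this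
      exact this
    -- G * P = G
    have hGP : G * P = G := by
      have hv : ∀ v : Fin ℓ → ℝ, (G * P).mulVec v = G.mulVec v := by
        intro v
        have hker : kZXᵀ.mulVec (v - P.mulVec v) = 0 := by
          rw [Matrix.mulVec_sub, Matrix.mulVec_mulVec, h1, sub_self]
        have h2 := h _ hker
        rw [Matrix.mulVec_sub, Matrix.mulVec_mulVec] at h2
        have := sub_eq_zero.mp h2
        exact this.symm
      ext i j
      have := congrFun (hv (Pi.single j 1)) i
      simpa [Matrix.mulVec_single] using this
    have hGsym : Gᵀ = G := by
      ext i j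
      simp only [Matrix.transpose_apply, hG]
      exact hsym (Z j) (Z i)
    have hPG : P * G = G := by
      have := congrArg Matrix.transpose hGP
      rw [Matrix.transpose_mul, hPsym, hGsym] at this
      exact this
    have hKG : P * (Kp * G) = Kp * G := by
      have h5 : Kp * G = G * Kpᵀ := by
        rw [← hG4, Matrix.transpose_mul, hGsym]
      rw [h5, ← Matrix.mul_assoc, hPG]
    have hGKP : G * Kp * P = G * Kp := by
      have h6 : G * Kp = Kpᵀ * G := by
        rw [← hG3, Matrix.transpose_mul, hGsym]
      rw [h6, Matrix.mul_assoc, hGP]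
    have hPKP : P * Kp * P = Kp := by
      calc P * Kp * P = P * (Kp * G * Kp) * P := by rw [hG2]
        _ = (P * (Kp * G)) * (Kp * P) := by simp only [Matrix.mul_assoc]
        _ = (Kp * G) * (Kp * P) := by rw [hKG]
        _ = Kp * (G * Kp * P) := by simp only [Matrix.mul_assoc]
        _ = Kp * (G * Kp) := by rw [hGKP]
        _ = Kp := by rw [← Matrix.mul_assoc, hG2]
    rw [hkXZ', hkZ', hPKP]
end
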